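/- arXiv:2310.20257 — 8 statements merged into one kernel-verified Lean document; each statement's English description precedes it below -/
import Mathlib

section
/- For the sequence (n_k)_{k≥1} of the explicit construction, and for all a, b ∈ ℕ with a ≠ b such that a/b ≠ 2^r for every r ∈ ℤ, there is a constant C (depending only on ε, R, d, a, b) such that for every integer c ≥ 0 one has #{(k,ℓ) ∈ ℕ² : k,ℓ ≥ 1, a·n_k − b·n_ℓ = c} ≤ C. -/
open Real MeasureTheory Filter Finset

noncomputable section

/-- The block `Δ_i` of `R^i` consecutive positive integers. -/
def Block (R i : ℕ) : Finset ℕ :=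
  Finset.Icc ((R ^ i - R) / (R - 1) + 1) ((R ^ (i + 1) - R) / (R - 1))

/-- `M(i) = ⌈i^(1-ε)⌉`. -/
def Mfun (ε : ℝ) (i : ℕ) : ℕ := ⌈(i : ℝ) ^ (1 - ε)⌉₊

/-- The explicit construction: parameters `ε ∈ (0,1)`, an integer `R > 8/ε`, an integer
`d ≥ 1`, for each `i ≥ 1` a partition of `Δ_i` into consecutive intervals of integers
`Δ_i^(1) < ⋯ < Δ_i^(M(i))` (element-wise) of essentially equal cardinality, and the
sequence `n_k := 2^(2^(i^4)) * (2^k + m)` for `k ∈ Δ_i^(m)`. -/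
structure ExplicitConstruction where
  ε : ℝ
  R : ℕ
  d : ℕ
  sub : ℕ → ℕ → Finset ℕ
  n : ℕ → ℕ
  hε : ε ∈ Set.Ioo (0 : ℝ) 1
  hR : 8 / ε < (R : ℝ)
  hd : 1 ≤ d
  hpart : ∀ i, 1 ≤ i → Block R i = (Finset.Icc 1 (Mfun ε i)).biUnion (sub i)
  hconsec : ∀ i, 1 ≤ i → ∀ m ∈ Finset.Icc 1 (Mfun ε i), ∃ lo hi, sub i m = Finset.Icc lo hi
  horder : ∀ i, 1 ≤ i → ∀ m ∈ Finset.Icc 1 (Mfun ε i), ∀ m' ∈ Finset.Icc 1 (Mfun ε i),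
    m < m' → ∀ k ∈ sub i m, ∀ l ∈ sub i m', k < l
  hcard : ∀ i, 1 ≤ i → ∀ m ∈ Finset.Icc 1 (Mfun ε i),
    |((sub i m).card : ℝ) - (R : ℝ) ^ i / (Mfun ε i : ℝ)| ≤ 1
  hn : ∀ i, 1 ≤ i → ∀ m ∈ Finset.Icc 1 (Mfun ε i), ∀ k ∈ sub i m,
    n k = 2 ^ 2 ^ i ^ 4 * (2 ^ k + m)

/-! Write `A_i = 2^(i^4)`, so that `n_k = 2^(A_i) (2^k + m)` with `m ≤ k` is `2^(A_i + k)` up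
to a factor `2`. Since `n` grows by a factor `≥ 3/2` at each step, every solution but the one
with the least `k` satisfies `b n_ℓ ≤ a n_k ≤ 3 b n_ℓ`, so `A_i + k` and `A_j + ℓ` differ by a
bounded amount; the `A_i` being huge compared with the blocks, this forces `i = j` once `k` is
large. Then `c = 2^(A_i) (a 2^k - b 2^ℓ + a m - b m')`, and as `a/b` is not a power of `2`,
`|a 2^k - b 2^ℓ| ≥ 2^min(k,ℓ)`, which dominates `a m - b m'`: so `c` is `2^(A_i + k)` up to a
bounded factor. Since `k ↦ A_i + k` is strictly increasing, only boundedly many `k` remain, and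
`k` determines `ℓ`. -/

lemma lt_add_of_two_pow_le_mul_two_pow {x y q : ℕ} (h : 2 ^ x ≤ q * 2 ^ y) : x < y + q := by
  have hq : q * 2 ^ y < 2 ^ (y + q) := by
    rw [pow_add, mul_comm]
    exact Nat.mul_lt_mul_of_pos_left q.lt_two_pow_self (by positivity)
  exact (Nat.pow_lt_pow_iff_right (by norm_num)).mp (h.trans_lt hq)

lemma two_mul_two_pow_pow_le {i j : ℕ} (h : i < j) : 2 * 2 ^ i ^ 4 ≤ 2 ^ j ^ 4 := by
  rw [← pow_succ']
  exact Nat.pow_le_pow_right two_pos (Nat.pow_lt_pow_left h (by norm_num))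

lemma eventually_mul_add_le_two_pow (p q : ℕ) : ∀ᶠ x in atTop, p * (x + q) ≤ 2 ^ x := by
  have hlin := (isLittleO_coe_const_pow_of_one_lt (R := ℝ) one_lt_two).bound
    (c := 1 / (2 * p + 1)) (by positivity)
  filter_upwards [hlin, eventually_ge_atTop q] with x hx hqx
  have hx' : ((2 * p + 1) * x : ℝ) ≤ 2 ^ x := by
    rw [Real.norm_natCast, norm_pow, Real.norm_two, div_mul_eq_mul_div, one_mul,
      le_div_iff₀ (by positivity)] at hx
    linarith
  have : (2 * p + 1) * x ≤ 2 ^ x := by exact_mod_cast hx'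
  nlinarith

lemma eventually_pow_succ_add_lt_two_pow_pow (R G : ℕ) :
    ∀ᶠ i in atTop, R ^ (i + 1) + G < 2 ^ i ^ 4 := by
  filter_upwards [eventually_ge_atTop (R + G + 3)] with i hi
  set T := R + G + 1
  have hexp : T * (i + 1) ≤ i ^ 4 := by
    have : i + 1 ≤ i ^ 3 := by
      calc i + 1 ≤ 3 * 3 * i := by omega
        _ ≤ i * i * i := by gcongr <;> omega
        _ = i ^ 3 := by ring
    calc T * (i + 1) ≤ i * i ^ 3 := Nat.mul_le_mul (by omega) this
      _ = i ^ 4 := by ring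
  calc R ^ (i + 1) + G < R ^ (i + 1) + (G + 1) ^ (i + 1) := by
        have := Nat.le_self_pow (n := i + 1) (by omega) (G + 1)
        omega
    _ ≤ T ^ (i + 1) := by
        rw [show T = R + (G + 1) by omega]
        exact pow_add_pow_le (Nat.zero_le _) (Nat.zero_le _) (Nat.succ_ne_zero i)
    _ < (2 ^ T) ^ (i + 1) := Nat.pow_lt_pow_left T.lt_two_pow_self (Nat.succ_ne_zero i)
    _ = 2 ^ (T * (i + 1)) := (pow_mul 2 T (i + 1)).symm
    _ ≤ 2 ^ i ^ 4 := Nat.pow_le_pow_right two_pos hexp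

lemma Set.finite_and_ncard_le_of_forall_le_add {S : Set ℕ} {w : ℕ}
    (h : ∀ x ∈ S, ∀ y ∈ S, x ≤ y + w) : S.Finite ∧ S.ncard ≤ w + 1 := by
  rcases S.eq_empty_or_nonempty with rfl | hS
  · simp
  have hsub : S ⊆ Set.Icc (sInf S) (sInf S + w) :=
    fun x hx => ⟨Nat.sInf_le hx, h x hx _ (Nat.sInf_mem hS)⟩
  refine ⟨(Set.finite_Icc _ _).subset hsub,
    (Set.ncard_le_ncard hsub (Set.finite_Icc _ _)).trans ?_⟩
  simp only [Set.ncard_Icc_nat]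
  omega

/-- `(R^i - R)/(R - 1) = R + ⋯ + R^(i-1)`, the number of integers in the blocks before `Δ_i`. -/
def blockStart (R i : ℕ) : ℕ := (R ^ i - R) / (R - 1)

lemma mem_Block_iff {R i k : ℕ} :
    k ∈ Block R i ↔ blockStart R i < k ∧ k ≤ blockStart R (i + 1) := by
  simp only [Block, blockStart, Finset.mem_Icc]
  omega

lemma blockStart_mono {R : ℕ} (hR : 1 ≤ R) : Monotone (blockStart R) :=
  fun _ _ h => Nat.div_le_div_right (Nat.sub_le_sub_right (Nat.pow_le_pow_right hR h) R)

lemma blockStart_le_pow (R i : ℕ) : blockStart R i ≤ R ^ i :=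
  (Nat.div_le_self _ _).trans (Nat.sub_le _ _)

lemma le_blockStart_succ {R : ℕ} (hR : 2 ≤ R) (i : ℕ) : i ≤ blockStart R (i + 1) := by
  have hB : 1 + (i + 1) * (R - 1) ≤ R ^ (i + 1) := by
    simpa [show 1 + (R - 1) = R by omega] using
      one_add_mul_le_pow_of_sq_nonneg (Nat.zero_le _) (Nat.zero_le _) (Nat.zero_le _) (i + 1)
        (a := R - 1)
  rw [blockStart, Nat.le_div_iff_mul_le (by omega)]
  have : (i + 1) * (R - 1) = i * (R - 1) + (R - 1) := by ring
  omega

lemma le_of_mem_Block_of_le {R i j k l : ℕ} (hR : 1 ≤ R) (hk : k ∈ Block R i)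
    (hl : l ∈ Block R j) (hkl : k ≤ l) : i ≤ j := by
  by_contra! hji
  have := blockStart_mono hR (by omega : j + 1 ≤ i)
  rw [mem_Block_iff] at hk hl
  omega

lemma le_of_mem_Block {R i k : ℕ} (hR : 2 ≤ R) (hk : k ∈ Block R i) : i ≤ k := by
  rw [mem_Block_iff] at hk
  cases i with
  | zero => exact Nat.zero_le _
  | succ i => have := le_blockStart_succ hR i; omega

lemma le_pow_of_mem_Block {R i k : ℕ} (hk : k ∈ Block R i) : k ≤ R ^ (i + 1) :=
  (mem_Block_iff.mp hk).2.trans (blockStart_le_pow R (i + 1))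

lemma exists_mem_Block {R k : ℕ} (hR : 2 ≤ R) (hk : 1 ≤ k) :
    ∃ i, 1 ≤ i ∧ k ∈ Block R i := by
  have hex : ∃ j, k ≤ blockStart R j := ⟨k + 1, le_blockStart_succ hR k⟩
  have h0 : blockStart R 0 = 0 := by simp [blockStart]; omega
  have h1 : blockStart R 1 = 0 := by simp [blockStart]
  obtain ⟨i, hi⟩ : ∃ i, Nat.find hex = i + 1 :=
    Nat.exists_eq_succ_of_ne_zero fun h => by have := Nat.find_spec hex; rw [h, h0] at this; omega
  have hmin : blockStart R i < k := not_le.mp (Nat.find_min hex (by omega))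
  have hspec : k ≤ blockStart R (i + 1) := hi ▸ Nat.find_spec hex
  refine ⟨i, Nat.one_le_iff_ne_zero.mpr ?_, mem_Block_iff.mpr ⟨hmin, hspec⟩⟩
  rintro rfl
  rw [zero_add, h1] at hspec
  omega

lemma mul_two_pow_ne_mul_two_pow {a b : ℕ} (hb : b ≠ 0)
    (hpow : ∀ r : ℤ, (a : ℝ) / (b : ℝ) ≠ (2 : ℝ) ^ r) (x y : ℕ) :
    a * 2 ^ x ≠ b * 2 ^ y := by
  intro h
  apply hpow ((y : ℤ) - x)
  rw [zpow_sub₀ two_ne_zero, zpow_natCast, zpow_natCast,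
    div_eq_div_iff (by exact_mod_cast hb) (by positivity)]
  exact_mod_cast h.trans (mul_comm _ _)

lemma mul_two_pow_add_two_pow_min_le {a b x y : ℕ} (h : a * 2 ^ x ≠ b * 2 ^ y) :
    b * 2 ^ y + 2 ^ min x y ≤ a * 2 ^ x ∨ a * 2 ^ x + 2 ^ min x y ≤ b * 2 ^ y := by
  obtain ⟨x', hx⟩ := Nat.exists_eq_add_of_le (min_le_left x y)
  obtain ⟨y', hy⟩ := Nat.exists_eq_add_of_le (min_le_right x y)
  have hfx : a * 2 ^ x = a * 2 ^ x' * 2 ^ min x y := by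
    rw [mul_assoc, ← pow_add, add_comm, ← hx]
  have hfy : b * 2 ^ y = b * 2 ^ y' * 2 ^ min x y := by
    rw [mul_assoc, ← pow_add, add_comm, ← hy]
  rw [hfx, hfy] at h ⊢
  rcases Nat.lt_or_gt_of_ne (show a * 2 ^ x' ≠ b * 2 ^ y' from fun e => h (by rw [e])) with
    hlt | hlt
  · have := Nat.mul_le_mul_right (2 ^ min x y) (by omega : a * 2 ^ x' + 1 ≤ b * 2 ^ y')
    exact Or.inr (by linarith)
  · have := Nat.mul_le_mul_right (2 ^ min x y) (by omega : b * 2 ^ y' + 1 ≤ a * 2 ^ x')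
    exact Or.inl (by linarith)

lemma two_pow_min_le_two_mul {a b k l m m' w : ℕ} (hne : a * 2 ^ k ≠ b * 2 ^ l)
    (heq : a * (2 ^ k + m) = b * (2 ^ l + m') + w)
    (hsmall : 2 * (a * m + b * m') ≤ 2 ^ min k l) : 2 ^ min k l ≤ 2 * w := by
  have hpos : 0 < 2 ^ min k l := by positivity
  rw [mul_add, mul_add] at heq
  rcases mul_two_pow_add_two_pow_min_le hne with h | h <;> nlinarith

lemma two_pow_le_and_le_two_pow_of_same_level {a b A k l m m' c G : ℕ}
    (hne : a * 2 ^ k ≠ b * 2 ^ l) (hm : m ≤ k)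
    (heq : a * (2 ^ A * (2 ^ k + m)) = b * (2 ^ A * (2 ^ l + m')) + c) (hkl : k < l + G)
    (hsmall : 2 * (a * m + b * m') ≤ 2 ^ min k l) :
    2 ^ (A + k) ≤ 2 ^ (G + 1) * c ∧ c ≤ 2 ^ (A + k + a + 1) := by
  have hA : 0 < 2 ^ A := by positivity
  have heq' : 2 ^ A * (a * (2 ^ k + m)) = 2 ^ A * (b * (2 ^ l + m')) + c := by
    rw [mul_left_comm, heq, mul_left_comm]
  obtain ⟨w, hw⟩ := Nat.exists_eq_add_of_le (Nat.le_of_mul_le_mul_left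
    (heq'.trans_ge (Nat.le_add_right _ _)) hA)
  have hc : c = 2 ^ A * w := by rw [hw, mul_add] at heq'; omega
  have hmk : m ≤ 2 ^ k := hm.trans k.lt_two_pow_self.le
  constructor
  · have hlow := two_pow_min_le_two_mul hne hw hsmall
    calc 2 ^ (A + k) ≤ 2 ^ (A + (min k l + G)) := Nat.pow_le_pow_right two_pos (by omega)
      _ = 2 ^ A * 2 ^ G * 2 ^ min k l := by rw [pow_add, pow_add]; ring
      _ ≤ 2 ^ A * 2 ^ G * (2 * w) := Nat.mul_le_mul_left _ hlow
      _ = 2 ^ (G + 1) * c := by rw [hc, pow_succ]; ring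
  · calc c = 2 ^ A * w := hc
      _ ≤ 2 ^ A * (a * (2 ^ k + m)) := Nat.mul_le_mul_left _ (by omega)
      _ ≤ 2 ^ A * (2 ^ a * (2 * 2 ^ k)) :=
          Nat.mul_le_mul_left _ (Nat.mul_le_mul a.lt_two_pow_self.le (by omega))
      _ = 2 ^ (A + k + a + 1) := by rw [pow_add, pow_add, pow_add]; ring

lemma eq_of_two_pow_pow_add_window {R G i₀ i j k l : ℕ} (hR : 1 ≤ R)
    (hi₀ : ∀ x ≥ i₀, R ^ (x + 1) + G < 2 ^ x ^ 4) (hk : R ^ (i₀ + 1) + G < k)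
    (hki : k ≤ R ^ (i + 1)) (hlj : l ≤ R ^ (j + 1))
    (h₁ : 2 ^ i ^ 4 + k < 2 ^ j ^ 4 + l + G) (h₂ : 2 ^ j ^ 4 + l < 2 ^ i ^ 4 + k + G) :
    i = j := by
  have hbig : ∀ {x y}, R ^ (i₀ + 1) < y → y ≤ R ^ (x + 1) → R ^ (x + 1) + G < 2 ^ x ^ 4 :=
    fun {x _} hy hyx => hi₀ x <| by
      by_contra! hx
      have := Nat.pow_le_pow_right hR (by omega : x + 1 ≤ i₀ + 1)
      omega
  rcases lt_trichotomy i j with hij | hij | hij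
  · have := two_mul_two_pow_pow_le hij
    have := hbig (y := k) (by omega) hki
    omega
  · exact hij
  · have := two_mul_two_pow_pow_le hij
    have := hbig (y := l) (by omega) hlj
    omega

lemma le_add_two_mul_of_two_pow_le {R D i i' k k' c : ℕ} (hR : 1 ≤ R) (hk : k ∈ Block R i)
    (hk' : k' ∈ Block R i') (hlow : 2 ^ (2 ^ i ^ 4 + k) ≤ 2 ^ D * c)
    (hup : c ≤ 2 ^ (2 ^ i' ^ 4 + k' + D)) : k ≤ k' + 2 * D := by
  have hexp : 2 ^ i ^ 4 + k ≤ 2 ^ i' ^ 4 + k' + 2 * D := by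
    refine (Nat.pow_le_pow_iff_right (by norm_num : 1 < 2)).mp (hlow.trans ?_)
    calc 2 ^ D * c ≤ 2 ^ D * 2 ^ (2 ^ i' ^ 4 + k' + D) := Nat.mul_le_mul_left _ hup
      _ = 2 ^ (2 ^ i' ^ 4 + k' + 2 * D) := by rw [← pow_add]; ring_nf
  rcases le_or_gt k k' with hkk' | hk'k
  · omega
  · have := Nat.pow_le_pow_right two_pos
      (Nat.pow_le_pow_left (le_of_mem_Block_of_le hR hk' hk hk'k.le) 4)
    omega

lemma Mfun_le_self {ε : ℝ} (hε : 0 ≤ ε) {i : ℕ} (hi : 1 ≤ i) : Mfun ε i ≤ i := by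
  refine Nat.ceil_le.mpr ?_
  calc (i : ℝ) ^ (1 - ε) ≤ (i : ℝ) ^ (1 : ℝ) :=
        Real.rpow_le_rpow_of_exponent_le (by exact_mod_cast hi) (by linarith)
    _ = i := Real.rpow_one _

namespace ExplicitConstruction

variable (E : ExplicitConstruction)

lemma two_le_R : 2 ≤ E.R := by
  obtain ⟨hε₀, hε₁⟩ := E.hε
  have : (1 : ℝ) < E.R := by
    have : (8 : ℝ) < 8 / E.ε := by rw [lt_div_iff₀ hε₀]; linarith
    linarith [E.hR]
  exact_mod_cast this

/-- `k ∈ Δ_i^(m)`. -/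
def MemPiece (i m k : ℕ) : Prop :=
  1 ≤ i ∧ m ∈ Finset.Icc 1 (Mfun E.ε i) ∧ k ∈ E.sub i m

variable {E}

lemma exists_memPiece {k : ℕ} (hk : 1 ≤ k) : ∃ i m, E.MemPiece i m k := by
  obtain ⟨i, hi, hki⟩ := exists_mem_Block E.two_le_R hk
  rw [E.hpart i hi, Finset.mem_biUnion] at hki
  obtain ⟨m, hm, hkm⟩ := hki
  exact ⟨i, m, hi, hm, hkm⟩

namespace MemPiece

variable {i m k : ℕ}

lemma mem_Block (h : E.MemPiece i m k) : k ∈ Block E.R i :=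
  E.hpart i h.1 ▸ Finset.mem_biUnion.mpr ⟨m, h.2.1, h.2.2⟩

lemma n_eq (h : E.MemPiece i m k) : E.n k = 2 ^ 2 ^ i ^ 4 * (2 ^ k + m) :=
  E.hn i h.1 m h.2.1 k h.2.2

lemma le (h : E.MemPiece i m k) : m ≤ k :=
  (Finset.mem_Icc.mp h.2.1).2.trans <|
    (Mfun_le_self E.hε.1.le h.1).trans (le_of_mem_Block E.two_le_R h.mem_Block)

lemma two_pow_le_n (h : E.MemPiece i m k) : 2 ^ (2 ^ i ^ 4 + k) ≤ E.n k := by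
  rw [h.n_eq, pow_add]
  exact Nat.mul_le_mul_left _ (Nat.le_add_right _ _)

lemma n_le (h : E.MemPiece i m k) : E.n k ≤ 2 * 2 ^ (2 ^ i ^ 4 + k) := by
  have : m ≤ 2 ^ k := h.le.trans k.lt_two_pow_self.le
  calc E.n k ≤ 2 ^ 2 ^ i ^ 4 * (2 ^ k + 2 ^ k) := h.n_eq ▸ Nat.mul_le_mul_left _ (by omega)
    _ = 2 * 2 ^ (2 ^ i ^ 4 + k) := by rw [pow_add]; ring

end MemPiece

lemma n_pos {k : ℕ} (hk : 1 ≤ k) : 0 < E.n k := by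
  obtain ⟨i, m, h⟩ := exists_memPiece (E := E) hk
  exact lt_of_lt_of_le (by positivity) h.two_pow_le_n

lemma three_mul_n_le_two_mul_n_succ {k : ℕ} (hk : 1 ≤ k) : 3 * E.n k ≤ 2 * E.n (k + 1) := by
  obtain ⟨i, m, h⟩ := exists_memPiece (E := E) hk
  obtain ⟨j, m', h'⟩ := exists_memPiece (E := E) (by omega : 1 ≤ k + 1)
  rcases (le_of_mem_Block_of_le (by linarith [E.two_le_R]) h.mem_Block h'.mem_Block
    k.le_succ).lt_or_eq with hij | rfl
  · have hA := two_mul_two_pow_pow_le hij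
    have hA₁ : 1 ≤ 2 ^ i ^ 4 := Nat.one_le_two_pow
    calc 3 * E.n k ≤ 2 ^ 3 * 2 ^ (2 ^ i ^ 4 + k) := by linarith [h.n_le]
      _ ≤ 2 * 2 ^ (2 ^ j ^ 4 + (k + 1)) := by
          rw [← pow_add, ← pow_succ']
          exact Nat.pow_le_pow_right two_pos (by omega)
      _ ≤ 2 * E.n (k + 1) := Nat.mul_le_mul_left _ h'.two_pow_le_n
  · have hmm' : m ≤ m' := by
      by_contra! hlt
      have := E.horder i h.1 m' h'.2.1 m h.2.1 hlt (k + 1) h'.2.2 k h.2.2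
      omega
    have hmk : m ≤ 2 ^ k := h.le.trans k.lt_two_pow_self.le
    calc 3 * E.n k = 2 ^ 2 ^ i ^ 4 * (3 * (2 ^ k + m)) := by rw [h.n_eq]; ring
      _ ≤ 2 ^ 2 ^ i ^ 4 * (2 * (2 ^ (k + 1) + m')) :=
          Nat.mul_le_mul_left _ (by rw [pow_succ]; omega)
      _ = 2 * E.n (k + 1) := by rw [h'.n_eq]; ring

lemma three_mul_n_le_two_mul_n {k l : ℕ} (hk : 1 ≤ k) (hkl : k < l) :
    3 * E.n k ≤ 2 * E.n l := by
  induction l, hkl using Nat.le_induction with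
  | base => exact three_mul_n_le_two_mul_n_succ hk
  | succ l hkl ih =>
    have := three_mul_n_le_two_mul_n_succ (E := E) (by omega : 1 ≤ l)
    omega

lemma strictMonoOn_n : StrictMonoOn E.n (Set.Ici 1) := fun k hk _ _ hkl => by
  have := three_mul_n_le_two_mul_n (E := E) hk hkl
  have := n_pos (E := E) hk
  omega

variable (E) in
def solutions (a b c : ℕ) : Set (ℕ × ℕ) :=
  {p | 1 ≤ p.1 ∧ 1 ≤ p.2 ∧ a * E.n p.1 = b * E.n p.2 + c}

lemma injOn_fst_solutions {a b c : ℕ} (hb : 1 ≤ b) :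
    Set.InjOn Prod.fst (E.solutions a b c) := by
  rintro ⟨k, l⟩ ⟨-, hl, h⟩ ⟨k', l'⟩ ⟨-, hl', h'⟩ (rfl : k = k')
  dsimp only at hl hl' h h'
  have : E.n l = E.n l' := Nat.eq_of_mul_eq_mul_left hb (by omega)
  exact Prod.ext rfl (strictMonoOn_n.injOn hl hl' this)

lemma mul_n_le_three_mul_of_lt {a b c k l k' l' : ℕ} (h : (k, l) ∈ E.solutions a b c)
    (h' : (k', l') ∈ E.solutions a b c) (hkk' : k < k') : a * E.n k' ≤ 3 * (b * E.n l') := by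
  obtain ⟨hk, -, heq⟩ := h
  obtain ⟨-, -, heq'⟩ := h'
  dsimp only at hk heq heq'
  have := Nat.mul_le_mul_left a (three_mul_n_le_two_mul_n (E := E) hk hkk')
  linarith [Nat.zero_le (b * E.n l)]

lemma exponent_lt_of_mul_n_le {i m k j m' l p q : ℕ} (hk : E.MemPiece i m k)
    (hl : E.MemPiece j m' l) (hp : 1 ≤ p) (h : p * E.n k ≤ q * E.n l) :
    2 ^ i ^ 4 + k < 2 ^ j ^ 4 + l + 2 * q :=
  lt_add_of_two_pow_le_mul_two_pow <|
    calc 2 ^ (2 ^ i ^ 4 + k) ≤ E.n k := hk.two_pow_le_n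
      _ ≤ p * E.n k := Nat.le_mul_of_pos_left _ hp
      _ ≤ q * E.n l := h
      _ ≤ q * (2 * 2 ^ (2 ^ j ^ 4 + l)) := Nat.mul_le_mul_left _ hl.n_le
      _ = 2 * q * 2 ^ (2 ^ j ^ 4 + l) := by ring

theorem exists_two_pow_le_and_le_two_pow {a b : ℕ} (ha : 1 ≤ a) (hb : 1 ≤ b)
    (hne : ∀ x y, a * 2 ^ x ≠ b * 2 ^ y) :
    ∃ K D : ℕ, ∀ k l c, K < k → 1 ≤ l → a * E.n k = b * E.n l + c →
      a * E.n k ≤ 3 * (b * E.n l) →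
      ∃ i, k ∈ Block E.R i ∧
        2 ^ (2 ^ i ^ 4 + k) ≤ 2 ^ D * c ∧ c ≤ 2 ^ (2 ^ i ^ 4 + k + D) := by
  set G := 2 * a + 2 * (3 * b)
  obtain ⟨i₀, hi₀⟩ := eventually_atTop.mp (eventually_pow_succ_add_lt_two_pow_pow E.R G)
  obtain ⟨μ₀, hμ₀⟩ := eventually_atTop.mp (eventually_mul_add_le_two_pow (2 * (a + b)) G)
  refine ⟨E.R ^ (i₀ + 1) + G + μ₀, G + 1, fun k l c hK hl heq h3 => ?_⟩
  obtain ⟨i, m, hk⟩ := exists_memPiece (E := E) (by omega : 1 ≤ k)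
  obtain ⟨j, m', hl'⟩ := exists_memPiece (E := E) hl
  have h₁ := exponent_lt_of_mul_n_le hk hl' ha (h3.trans_eq (mul_assoc _ _ _).symm)
  have h₂ := exponent_lt_of_mul_n_le hl' hk hb (heq ▸ Nat.le_add_right _ _)
  obtain rfl : i = j := eq_of_two_pow_pow_add_window (by linarith [E.two_le_R]) hi₀ (by omega)
    (le_pow_of_mem_Block hk.mem_Block) (le_pow_of_mem_Block hl'.mem_Block) (by omega) (by omega)
  have hsmall : 2 * (a * m + b * m') ≤ 2 ^ min k l := by
    have := Nat.mul_le_mul_left a (hk.le.trans (by omega : k ≤ min k l + G))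
    have := Nat.mul_le_mul_left b (hl'.le.trans (by omega : l ≤ min k l + G))
    calc 2 * (a * m + b * m') ≤ 2 * (a + b) * (min k l + G) := by linarith
      _ ≤ 2 ^ min k l := hμ₀ _ (by omega)
  obtain ⟨hlow, hup⟩ := two_pow_le_and_le_two_pow_of_same_level (hne k l) hk.le
    (by rw [← hk.n_eq, ← hl'.n_eq]; exact heq) (by omega : k < l + G) hsmall
  exact ⟨i, hk.mem_Block, hlow, hup.trans (Nat.pow_le_pow_right two_pos (by omega))⟩

theorem exists_forall_finite_and_ncard_solutions_le {a b : ℕ} (ha : 1 ≤ a) (hb : 1 ≤ b)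
    (hne : ∀ x y, a * 2 ^ x ≠ b * 2 ^ y) :
    ∃ C, ∀ c, (E.solutions a b c).Finite ∧ (E.solutions a b c).ncard ≤ C := by
  obtain ⟨K, D, hest⟩ := exists_two_pow_le_and_le_two_pow (E := E) ha hb hne
  refine ⟨K + 1 + 1 + (2 * D + 1), fun c => ?_⟩
  set S := E.solutions a b c
  set k₀ := sInf (Prod.fst '' S)
  set T := {k ∈ Prod.fst '' S | K < k ∧ k₀ < k}
  have hest' : ∀ k ∈ T, ∃ i, k ∈ Block E.R i ∧
      2 ^ (2 ^ i ^ 4 + k) ≤ 2 ^ D * c ∧ c ≤ 2 ^ (2 ^ i ^ 4 + k + D) := by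
    rintro _ ⟨⟨⟨k, l⟩, hp, rfl⟩, hK, hk₀⟩
    obtain ⟨⟨k₁, l₁⟩, hq, hqk₀⟩ :=
      Nat.sInf_mem (⟨k, _, hp, rfl⟩ : (Prod.fst '' S).Nonempty)
    have hk₁ : k₁ < k := by dsimp only at hqk₀; omega
    exact hest k l c hK hp.2.1 hp.2.2 (mul_n_le_three_mul_of_lt hq hp hk₁)
  have hT : ∀ k ∈ T, ∀ k' ∈ T, k ≤ k' + 2 * D := by
    intro k hk k' hk'
    obtain ⟨i, hi, hlow, -⟩ := hest' k hk
    obtain ⟨i', hi', -, hup⟩ := hest' k' hk'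
    exact le_add_two_mul_of_two_pow_le (by linarith [E.two_le_R]) hi hi' hlow hup
  have hcover : Prod.fst '' S ⊆ Set.Iic K ∪ {k₀} ∪ T := by
    intro k hk
    rcases le_or_gt k K with hK | hK
    · exact Or.inl (Or.inl hK)
    rcases (Nat.sInf_le hk).lt_or_eq with hk₀ | hk₀
    · exact Or.inr ⟨hk, hK, hk₀⟩
    · exact Or.inl (Or.inr hk₀.symm)
  obtain ⟨hTfin, hTcard⟩ := Set.finite_and_ncard_le_of_forall_le_add hT
  have hfin : (Set.Iic K ∪ {k₀} ∪ T).Finite :=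
    ((Set.finite_Iic K).union (Set.finite_singleton k₀)).union hTfin
  have hinj := injOn_fst_solutions (E := E) (a := a) (c := c) hb
  refine ⟨Set.Finite.of_finite_image (hfin.subset hcover) hinj, ?_⟩
  rw [← hinj.ncard_image]
  calc (Prod.fst '' S).ncard ≤ (Set.Iic K ∪ {k₀} ∪ T).ncard :=
        Set.ncard_le_ncard hcover hfin
    _ ≤ (Set.Iic K).ncard + ({k₀} : Set ℕ).ncard + T.ncard :=
        (Set.ncard_union_le _ _).trans (Nat.add_le_add_right (Set.ncard_union_le _ _) _)
    _ ≤ K + 1 + 1 + (2 * D + 1) := by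
        rw [Set.ncard_Iic_nat, Set.ncard_singleton]
        omega

end ExplicitConstruction

theorem statement1_general (E : ExplicitConstruction) (a b : ℕ) (ha : 1 ≤ a) (hb : 1 ≤ b)
    (hpow : ∀ r : ℤ, (a : ℝ) / (b : ℝ) ≠ (2:ℝ) ^ r) :
    ∃ C : ℕ, ∀ c : ℤ, 0 ≤ c →
      {p : ℕ × ℕ | 1 ≤ p.1 ∧ 1 ≤ p.2 ∧
          (a : ℤ) * (E.n p.1 : ℤ) - (b : ℤ) * (E.n p.2 : ℤ) = c}.Finite ∧
      {p : ℕ × ℕ | 1 ≤ p.1 ∧ 1 ≤ p.2 ∧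
          (a : ℤ) * (E.n p.1 : ℤ) - (b : ℤ) * (E.n p.2 : ℤ) = c}.ncard ≤ C := by
  obtain ⟨C, hC⟩ := E.exists_forall_finite_and_ncard_solutions_le ha hb
    (mul_two_pow_ne_mul_two_pow (by omega) hpow)
  refine ⟨C, fun c hc => ?_⟩
  lift c to ℕ using hc
  have hS : {p : ℕ × ℕ | 1 ≤ p.1 ∧ 1 ≤ p.2 ∧
      (a : ℤ) * (E.n p.1 : ℤ) - (b : ℤ) * (E.n p.2 : ℤ) = c} = E.solutions a b c := by
    ext p
    simp only [ExplicitConstruction.solutions, Set.mem_ofPred_eq, sub_eq_iff_eq_add']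
    norm_cast
  exact hS ▸ hC c

/-- Lemma 2.1 (i): if `a/b` is not an integer power of `2`, the total number of solutions
`(k, ℓ)` of `a n_k - b n_ℓ = c` is bounded uniformly in `c ≥ 0`. -/
theorem statement1 (E : ExplicitConstruction) (a b : ℕ) (ha : 1 ≤ a) (hb : 1 ≤ b)
    (hab : a ≠ b) (hpow : ∀ r : ℤ, (a : ℝ) / (b : ℝ) ≠ (2:ℝ) ^ r) :
    ∃ C : ℕ, ∀ c : ℤ, 0 ≤ c →
      {p : ℕ × ℕ | 1 ≤ p.1 ∧ 1 ≤ p.2 ∧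
          (a : ℤ) * (E.n p.1 : ℤ) - (b : ℤ) * (E.n p.2 : ℤ) = c}.Finite ∧
      {p : ℕ × ℕ | 1 ≤ p.1 ∧ 1 ≤ p.2 ∧
          (a : ℤ) * (E.n p.1 : ℤ) - (b : ℤ) * (E.n p.2 : ℤ) = c}.ncard ≤ C :=
  statement1_general E a b ha hb hpow
end
end

section
/- For the sequence (n_k)_{k≥1} of the explicit construction, and for all a, b ∈ ℕ such that a/b = 2^r for some r ∈ ℤ \ {0}, there is a constant C (depending only on ε, R, d, a, b) such that for every integer c ≥ 0 one has Σ_{i₁≥1} Σ_{i₂≥1, i₂≠i₁} #{(k,ℓ) : k ∈ Δ_{i₁}, ℓ ∈ Δ_{i₂}, a·n_k − b·n_ℓ = c} ≤ C; that is, the number of solutions (k,ℓ) with a·n_k − b·n_ℓ = c for which k and ℓ lie in different blocks Δ_{i₁}, Δ_{i₂} is bounded uniformly in c ≥ 0. -/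
/-!
Write `lg x := Nat.log 2 x` for the binary length. For `k ∈ Δ_i` one has
`n_k = 2^(2^(i⁴)) (2^k + m)` with `m ≤ M(i) ≤ i ≤ k`, so `lg n_k = 2^(i⁴) + k`; in particular
`lg ∘ n` is injective. Since `2^((i+1)⁴)` eventually exceeds `2^(i⁴) + R^(i+1) + T`, the lengths
of `n_k` and `n_ℓ` for `k`, `ℓ` in different blocks differ by more than any fixed `T` once `k` is
large.

Now let `a n_k = b n_ℓ + c` with `k` large. Then `lg n_ℓ ≤ lg n_k + a`, so the separation forces
`lg n_ℓ` far below `lg n_k`; then `b n_ℓ < 2^(lg n_k - 1)`, so `lg c` pins down `lg n_k`, hence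
`k`, up to `a + 2` choices. Finally `k` determines `ℓ` through `b n_ℓ = a n_k - c`.
-/

open Real MeasureTheory Filter Finset

noncomputable section

lemma mul_lt_two_pow_log_two_add (a x : ℕ) : a * x < 2 ^ (Nat.log 2 x + a + 1) := by
  calc a * x < 2 ^ a * 2 ^ (Nat.log 2 x + 1) :=
        Nat.mul_lt_mul'' Nat.lt_two_pow_self (Nat.lt_pow_succ_log_self one_lt_two x)
    _ = 2 ^ (Nat.log 2 x + a + 1) := by ring

lemma log_two_le_add_of_le_mul {a x y : ℕ} (h : y ≤ a * x) : Nat.log 2 y ≤ Nat.log 2 x + a :=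
  Nat.lt_succ_iff.1 <| Nat.log_lt_of_lt_pow' (Nat.succ_ne_zero _)
    (h.trans_lt (mul_lt_two_pow_log_two_add a x))

lemma log_two_le_log_two_add_one_of_mul_eq {a b c x y : ℕ} (ha : 1 ≤ a) (heq : a * x = b * y + c)
    (hsep : Nat.log 2 y + b + 1 < Nat.log 2 x) : Nat.log 2 x ≤ Nat.log 2 c + 1 := by
  have hx : x ≠ 0 := by rintro rfl; simp at hsep
  have hby : b * y < 2 ^ (Nat.log 2 x - 1) :=
    (mul_lt_two_pow_log_two_add b y).trans_le (Nat.pow_le_pow_right two_pos (by omega))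
  have hxa : 2 ^ Nat.log 2 x ≤ a * x :=
    (Nat.pow_log_le_self 2 hx).trans (Nat.le_mul_of_pos_left x ha)
  have hsplit : 2 ^ Nat.log 2 x = 2 ^ (Nat.log 2 x - 1) * 2 := by
    rw [← pow_succ]; congr 1; omega
  have hc : 2 ^ (Nat.log 2 x - 1) ≤ c := by omega
  have := Nat.le_log_of_pow_le one_lt_two hc
  omega

theorem finite_and_ncard_le_of_log_two_separated {g : ℕ → ℕ} {U : Set ℕ} {s : Set (ℕ × ℕ)}
    {a b c K : ℕ} (ha : 1 ≤ a) (hb : 1 ≤ b) (hinj : Set.InjOn (fun k => Nat.log 2 (g k)) U)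
    (hs : ∀ k l, (k, l) ∈ s → k ∈ U ∧ l ∈ U ∧ a * g k = b * g l + c)
    (hsep : ∀ k l, (k, l) ∈ s → K < k → Nat.log 2 (g k) + (a + b) < Nat.log 2 (g l) ∨
      Nat.log 2 (g l) + (a + b) < Nat.log 2 (g k)) :
    s.Finite ∧ s.ncard ≤ K + a + 3 := by
  set W := U ∩ (fun k => Nat.log 2 (g k)) ⁻¹' Set.Icc (Nat.log 2 c - a) (Nat.log 2 c + 1)
  have hfst : Set.InjOn Prod.fst s := by
    rintro ⟨k, l⟩ hp ⟨k', l'⟩ hq (rfl : k = k')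
    obtain ⟨-, hl, hkl⟩ := hs _ _ hp
    obtain ⟨-, hl', hkl'⟩ := hs _ _ hq
    have hg : g l = g l' := Nat.eq_of_mul_eq_mul_left hb (by omega)
    rw [hinj hl hl' (congrArg (Nat.log 2) hg)]
  have himage : Prod.fst '' s ⊆ Set.Iic K ∪ W := by
    rintro _ ⟨⟨k, l⟩, hp, rfl⟩
    obtain ⟨hk, -, hkl⟩ := hs _ _ hp
    refine (le_or_gt k K).imp id fun hK => ⟨hk, ?_⟩
    have hlk : Nat.log 2 (g l) ≤ Nat.log 2 (g k) + a :=
      log_two_le_add_of_le_mul ((Nat.le_mul_of_pos_left _ hb).trans (by omega))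
    have hcx : Nat.log 2 c ≤ Nat.log 2 (g k) + a := log_two_le_add_of_le_mul (by omega)
    have hxc := log_two_le_log_two_add_one_of_mul_eq ha hkl
      (by rcases hsep _ _ hp hK with h | h <;> omega)
    exact ⟨by dsimp only; omega, hxc⟩
  have hW : W.Finite ∧ W.ncard ≤ a + 2 := by
    have hmaps : Set.MapsTo (fun k => Nat.log 2 (g k)) W
        (Set.Icc (Nat.log 2 c - a) (Nat.log 2 c + 1)) := fun _ hk => hk.2
    have hinjW : Set.InjOn (fun k => Nat.log 2 (g k)) W := hinj.mono Set.inter_subset_left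
    refine ⟨(Set.finite_Icc _ _).of_injOn hmaps hinjW, ?_⟩
    have := Set.ncard_le_ncard_of_injOn _ hmaps hinjW
    rw [Set.ncard_Icc_nat] at this
    omega
  have hunion : (Set.Iic K ∪ W).Finite := (Set.finite_Iic K).union hW.1
  refine ⟨(hunion.subset himage).of_finite_image hfst, ?_⟩
  calc s.ncard = (Prod.fst '' s).ncard := hfst.ncard_image.symm
    _ ≤ (Set.Iic K ∪ W).ncard := Set.ncard_le_ncard himage hunion
    _ ≤ (Set.Iic K).ncard + W.ncard := Set.ncard_union_le _ _
    _ ≤ K + a + 3 := by rw [Set.ncard_Iic_nat]; omega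

namespace Block

variable {R i j k l : ℕ}

lemma le_pow_of_mem (hk : k ∈ Block R i) : k ≤ R ^ (i + 1) :=
  (Finset.mem_Icc.1 hk).2.trans ((Nat.div_le_self _ _).trans (Nat.sub_le _ _))

lemma le_of_mem (hR : 2 ≤ R) (hk : k ∈ Block R i) : i ≤ k := by
  have hlo := (Finset.mem_Icc.1 hk).1
  obtain _ | i := i
  · exact Nat.zero_le k
  have hbern : 1 + (i + 1) * (R - 1) ≤ R ^ (i + 1) := by
    simpa [Nat.add_sub_cancel' (by omega : 1 ≤ R)] using
      one_add_mul_le_pow_of_sq_nonneg (Nat.zero_le ((R - 1) ^ 2)) (Nat.zero_le _)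
        (Nat.zero_le (2 + (R - 1))) (i + 1)
  have hi : i ≤ (R ^ (i + 1) - R) / (R - 1) := by
    rw [Nat.le_div_iff_mul_le (by omega)]
    rw [add_mul, one_mul] at hbern
    omega
  omega

lemma lt_of_mem_of_lt (hR : 1 ≤ R) (hij : i < j) (hk : k ∈ Block R i) (hl : l ∈ Block R j) :
    k < l := by
  have hpow : R ^ (i + 1) ≤ R ^ j := Nat.pow_le_pow_right hR hij
  calc k ≤ (R ^ (i + 1) - R) / (R - 1) := (Finset.mem_Icc.1 hk).2
    _ ≤ (R ^ j - R) / (R - 1) := Nat.div_le_div_right (Nat.sub_le_sub_right hpow R)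
    _ < l := (Finset.mem_Icc.1 hl).1

lemma eq_of_two_pow_pow_four_add_eq (hR : 1 ≤ R) (hk : k ∈ Block R i) (hl : l ∈ Block R j)
    (h : 2 ^ i ^ 4 + k = 2 ^ j ^ 4 + l) : k = l := by
  rcases lt_trichotomy i j with hij | rfl | hji
  · have := Nat.pow_le_pow_right two_pos (Nat.pow_le_pow_left hij.le 4)
    have := lt_of_mem_of_lt hR hij hk hl
    omega
  · omega
  · have := Nat.pow_le_pow_right two_pos (Nat.pow_le_pow_left hji.le 4)
    have := lt_of_mem_of_lt hR hji hl hk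
    omega

end Block

lemma exists_pow_add_lt_two_pow_pow_four (R T : ℕ) :
    ∃ I, ∀ i, I ≤ i → R ^ (i + 1) + T < 2 ^ i ^ 4 := by
  refine ⟨R + T + 2, fun i hi => ?_⟩
  have hexp : R * (i + 1) + T + 1 ≤ i ^ 4 := by
    have : i * i ≤ i ^ 4 := by
      rw [← sq]; exact Nat.pow_le_pow_right (by omega) (by norm_num)
    nlinarith
  calc R ^ (i + 1) + T < 2 ^ (R * (i + 1)) + 2 ^ T := by
        have h1 : R ^ (i + 1) ≤ 2 ^ (R * (i + 1)) := by
          rw [pow_mul]; exact Nat.pow_le_pow_left Nat.lt_two_pow_self.le _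
        have h2 : T < 2 ^ T := Nat.lt_two_pow_self
        omega
    _ ≤ 2 ^ (R * (i + 1) + T + 1) := by
        rw [pow_succ, pow_add]
        nlinarith [Nat.one_le_two_pow (n := R * (i + 1)), Nat.one_le_two_pow (n := T)]
    _ ≤ 2 ^ i ^ 4 := Nat.pow_le_pow_right two_pos hexp

lemma exists_two_pow_pow_four_add_pow_add_lt {R : ℕ} (hR : 1 ≤ R) (T : ℕ) :
    ∃ I, ∀ i j, i < j → I ≤ j → 2 ^ i ^ 4 + R ^ (i + 1) + T < 2 ^ j ^ 4 := by
  obtain ⟨I, hI⟩ := exists_pow_add_lt_two_pow_pow_four R T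
  refine ⟨I + 1, fun i j hij hj => ?_⟩
  obtain ⟨j, rfl⟩ : ∃ j', j = j' + 1 := ⟨j - 1, by omega⟩
  calc 2 ^ i ^ 4 + R ^ (i + 1) + T ≤ 2 ^ j ^ 4 + R ^ (j + 1) + T := by
        gcongr <;> omega
    _ < 2 ^ (j ^ 4 + 1) := by have := hI j (by omega); rw [pow_succ 2 (j ^ 4)]; omega
    _ ≤ 2 ^ (j + 1) ^ 4 :=
        Nat.pow_le_pow_right two_pos (Nat.pow_lt_pow_left (lt_add_one j) (by norm_num))

lemma exists_two_pow_pow_four_add_separated {R : ℕ} (hR : 2 ≤ R) (T : ℕ) :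
    ∃ K, ∀ i j k l, i ≠ j → k ∈ Block R i → l ∈ Block R j → K < k →
      2 ^ i ^ 4 + k + T < 2 ^ j ^ 4 + l ∨ 2 ^ j ^ 4 + l + T < 2 ^ i ^ 4 + k := by
  obtain ⟨I, hI⟩ := exists_two_pow_pow_four_add_pow_add_lt (by omega : 1 ≤ R) T
  refine ⟨R ^ I, fun i j k l hij hk hl hK => ?_⟩
  have hIi : I ≤ i := Nat.lt_succ_iff.1 <|
    (Nat.pow_lt_pow_iff_right (by omega)).1 (hK.trans_le (Block.le_pow_of_mem hk))
  rcases hij.lt_or_gt with h | h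
  · have := hI i j h (by omega)
    have := Block.le_pow_of_mem hk
    omega
  · have := hI j i h hIi
    have := Block.le_pow_of_mem hl
    omega

lemma log_two_two_pow_mul_two_pow_add {A k m : ℕ} (hm : m < 2 ^ k) :
    Nat.log 2 (2 ^ A * (2 ^ k + m)) = A + k := by
  apply Nat.log_eq_of_pow_le_of_lt_pow
  · rw [pow_add]; exact Nat.mul_le_mul_left _ (Nat.le_add_right _ _)
  · rw [pow_succ, pow_add, mul_assoc]
    exact (Nat.mul_lt_mul_left (by positivity)).2 (by omega)

namespace ExplicitConstruction

variable (E : ExplicitConstruction)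

lemma log_two_n {i k : ℕ} (hi : 1 ≤ i) (hk : k ∈ Block E.R i) :
    Nat.log 2 (E.n k) = 2 ^ i ^ 4 + k := by
  obtain ⟨m, hm, hkm⟩ := Finset.mem_biUnion.1 (E.hpart i hi ▸ hk)
  have hmk : m < 2 ^ k :=
    calc m ≤ Mfun E.ε i := (Finset.mem_Icc.1 hm).2
      _ ≤ i := Mfun_le_self E.hε.1.le hi
      _ ≤ k := Block.le_of_mem E.two_le_R hk
      _ < 2 ^ k := Nat.lt_two_pow_self
  rw [E.hn i hi m hm k hkm, log_two_two_pow_mul_two_pow_add hmk]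

lemma injOn_log_two_n :
    Set.InjOn (fun k => Nat.log 2 (E.n k)) {k | ∃ i, 1 ≤ i ∧ k ∈ Block E.R i} := by
  rintro k ⟨i, hi, hk⟩ l ⟨j, hj, hl⟩ h
  simp only [E.log_two_n hi hk, E.log_two_n hj hl] at h
  exact Block.eq_of_two_pow_pow_four_add_eq (by have := E.two_le_R; omega) hk hl h

end ExplicitConstruction

theorem statement2_general (E : ExplicitConstruction) (a b : ℕ) (ha : 1 ≤ a) (hb : 1 ≤ b) :
    ∃ C : ℕ, ∀ c : ℤ, 0 ≤ c →
      {p : ℕ × ℕ | ∃ i₁ i₂ : ℕ, 1 ≤ i₁ ∧ 1 ≤ i₂ ∧ i₁ ≠ i₂ ∧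
          p.1 ∈ Block E.R i₁ ∧ p.2 ∈ Block E.R i₂ ∧
          (a : ℤ) * (E.n p.1 : ℤ) - (b : ℤ) * (E.n p.2 : ℤ) = c}.Finite ∧
      {p : ℕ × ℕ | ∃ i₁ i₂ : ℕ, 1 ≤ i₁ ∧ 1 ≤ i₂ ∧ i₁ ≠ i₂ ∧
          p.1 ∈ Block E.R i₁ ∧ p.2 ∈ Block E.R i₂ ∧
          (a : ℤ) * (E.n p.1 : ℤ) - (b : ℤ) * (E.n p.2 : ℤ) = c}.ncard ≤ C := by
  obtain ⟨K, hK⟩ := exists_two_pow_pow_four_add_separated E.two_le_R (a + b)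
  refine ⟨K + a + 3, fun c hc => ?_⟩
  lift c to ℕ using hc
  refine finite_and_ncard_le_of_log_two_separated (c := c) ha hb E.injOn_log_two_n ?_ ?_
  · rintro k l ⟨i₁, i₂, hi₁, hi₂, -, hk, hl, heq⟩
    exact ⟨⟨i₁, hi₁, hk⟩, ⟨i₂, hi₂, hl⟩, by zify; linarith⟩
  · rintro k l ⟨i₁, i₂, hi₁, hi₂, hne, hk, hl, -⟩ hkK
    rw [E.log_two_n hi₁ hk, E.log_two_n hi₂ hl]
    exact hK i₁ i₂ k l hne hk hl hkK

/-- Lemma 2.1 (ii): if `a/b = 2^r` with `r ≠ 0`, the number of solutions `(k, ℓ)` of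
`a n_k - b n_ℓ = c` with `k` and `ℓ` in different blocks `Δ_{i₁}`, `Δ_{i₂}` is bounded
uniformly in `c ≥ 0`. -/
theorem statement2 (E : ExplicitConstruction) (a b : ℕ) (ha : 1 ≤ a) (hb : 1 ≤ b)
    (r : ℤ) (hr : r ≠ 0) (hpow : (a : ℝ) / (b : ℝ) = (2:ℝ) ^ r) :
    ∃ C : ℕ, ∀ c : ℤ, 0 ≤ c →
      {p : ℕ × ℕ | ∃ i₁ i₂ : ℕ, 1 ≤ i₁ ∧ 1 ≤ i₂ ∧ i₁ ≠ i₂ ∧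
          p.1 ∈ Block E.R i₁ ∧ p.2 ∈ Block E.R i₂ ∧
          (a : ℤ) * (E.n p.1 : ℤ) - (b : ℤ) * (E.n p.2 : ℤ) = c}.Finite ∧
      {p : ℕ × ℕ | ∃ i₁ i₂ : ℕ, 1 ≤ i₁ ∧ 1 ≤ i₂ ∧ i₁ ≠ i₂ ∧
          p.1 ∈ Block E.R i₁ ∧ p.2 ∈ Block E.R i₂ ∧
          (a : ℤ) * (E.n p.1 : ℤ) - (b : ℤ) * (E.n p.2 : ℤ) = c}.ncard ≤ C :=
  statement2_general E a b ha hb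
end
end

section
/- For the sequence (n_k)_{k≥1} of the explicit construction, let a, b ∈ ℕ be such that a/b = 2^r for some r ∈ ℤ \ {0}. Then there is a constant C (depending only on ε, R, d, a, b) such that for every i ≥ 1 and every integer c ≥ 0 which is NOT of the form 2^(2^(i⁴))·b·m·(2^r − 1) for some m ∈ {1,…,M(i)}, one has #{(k,ℓ) : k,ℓ ∈ Δ_i, a·n_k − b·n_ℓ = c} ≤ C·i². -/
open Real MeasureTheory Filter Finset

noncomputable section

lemma two_pow_sub_aux {u v u' v' : ℕ} (hvu : v < u)
    (h : (2:ℤ)^u - 2^v = 2^u' - 2^v') : u = u' ∧ v = v' := by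
  have hv'u' : v' < u' := by
    have h1 : (2:ℤ)^v < 2^u := by
      exact pow_lt_pow_right₀ (by norm_num) hvu
    have h2 : (2:ℤ)^v' < 2^u' := by linarith
    exact (pow_lt_pow_iff_right₀ (by norm_num : (1:ℤ) < 2)).mp h2
  set d := u - v with hd
  set d' := u' - v' with hd'
  have hu : v + d = u := Nat.add_sub_cancel' hvu.le
  have hu' : v' + d' = u' := Nat.add_sub_cancel' hv'u'.le
  have hd1 : 1 ≤ d := by omega
  have hd1' : 1 ≤ d' := by omega
  have e1 : (2:ℤ)^u = 2^v * 2^d := by rw [← pow_add, hu]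
  have e2 : (2:ℤ)^u' = 2^v' * 2^d' := by rw [← pow_add, hu']
  have heq : (2:ℤ)^v * (2^d - 1) = 2^v' * (2^d' - 1) := by
    rw [mul_sub, mul_sub, mul_one, mul_one, ← e1, ← e2]; linarith
  have key : ∀ (w w' e e' : ℕ), 1 ≤ e → 1 ≤ e' → w ≤ w' →
      (2:ℤ)^w * (2^e - 1) = 2^w' * (2^e' - 1) → w = w' := by
    intro w w' e e' he he' hle heq2
    by_contra hne
    have hlt : w < w' := lt_of_le_of_ne hle hne
    have hsplit : (2:ℤ)^w' = 2^w * 2^(w'-w) := by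
      rw [← pow_add, Nat.add_sub_cancel' hlt.le]
    rw [hsplit, mul_assoc] at heq2
    have hcanc : (2:ℤ)^e - 1 = 2^(w'-w) * (2^e' - 1) :=
      mul_left_cancel₀ (pow_ne_zero w two_ne_zero) heq2
    have h2d : (2:ℤ) ∣ 2^e := dvd_pow_self 2 (by omega)
    have h2e : (2:ℤ) ∣ 2^(w'-w) := dvd_pow_self 2 (by omega)
    have h2x : (2:ℤ) ∣ 2^e - 1 := hcanc ▸ h2e.mul_right _
    omega
  have hvv : v = v' := by
    rcases le_total v v' with h' | h'
    · exact key _ _ _ _ hd1 hd1' h' heq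
    · exact (key _ _ _ _ hd1' hd1 h' heq.symm).symm
  subst hvv
  have hdd : (2:ℤ)^d - 1 = 2^d' - 1 := mul_left_cancel₀ (pow_ne_zero v two_ne_zero) heq
  have hdd2 : (2:ℕ)^d = 2^d' := by exact_mod_cast (by linarith : (2:ℤ)^d = 2^d')
  have : d = d' := Nat.pow_right_injective (le_refl 2) hdd2
  omega

lemma two_pow_sub_inj {u v u' v' : ℕ} (huv : u ≠ v)
    (h : (2:ℤ)^u - 2^v = 2^u' - 2^v') : u = u' ∧ v = v' := by
  rcases huv.lt_or_gt with h1 | h1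
  · have := two_pow_sub_aux h1 (show (2:ℤ)^v - 2^u = 2^v' - 2^u' by linarith)
    exact ⟨this.2, this.1⟩
  · exact two_pow_sub_aux h1 h

lemma core_count (Δ : Finset ℕ) (M t : ℕ) (sub : ℕ → Finset ℕ) (μ : ℕ → ℕ)
    (hμ : ∀ k ∈ Δ, μ k ∈ Finset.Icc 1 M ∧ k ∈ sub (μ k))
    (hicc : ∀ m ∈ Finset.Icc 1 M, ∃ lo hi, sub m = Finset.Icc lo hi)
    (huniq : ∀ k ∈ Δ, ∀ m ∈ Finset.Icc 1 M, k ∈ sub m → m = μ k)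
    (G c : ℤ) (hG : G ≠ 0)
    (hc : ∀ m ∈ Finset.Icc 1 M, c ≠ G * ((2^t - 1) * m)) :
    {p : ℕ × ℕ | p.1 ∈ Δ ∧ p.2 ∈ Δ ∧
      G * (2^(p.1+t) - 2^p.2 + 2^t * (μ p.1 : ℤ) - (μ p.2 : ℤ)) = c}.ncard
      ≤ M * M + M * t := by
  classical
  set S := {p : ℕ × ℕ | p.1 ∈ Δ ∧ p.2 ∈ Δ ∧
      G * (2^(p.1+t) - 2^p.2 + 2^t * (μ p.1 : ℤ) - (μ p.2 : ℤ)) = c} with hSdef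
  have hfin : S.Finite := by
    apply Set.Finite.subset (Δ ×ˢ Δ).finite_toSet
    intro p hp
    simp only [Finset.coe_product, Set.mem_prod]
    exact ⟨hp.1, hp.2.1⟩
  have hA1 : ∀ p ∈ S, p.2 = p.1 + t → μ p.1 ≠ μ p.2 := by
    intro p hp hpt heq
    obtain ⟨h1, h2, h3⟩ := hp
    apply hc (μ p.1) (hμ _ h1).1
    rw [← heq, hpt] at h3
    rw [← h3]; ring
  set SA := {p ∈ S | p.2 = p.1 + t} with hSAdef
  set SB := {p ∈ S | p.2 ≠ p.1 + t} with hSBdef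
  have hSAsub : SA ⊆ S := fun p hp => hp.1
  have hSBsub : SB ⊆ S := fun p hp => hp.1
  have hsplit : S = SA ∪ SB := by
    ext p
    simp only [hSAdef, hSBdef, Set.mem_union, Set.mem_setOf_eq]
    tauto
  have hSA : SA.ncard ≤ M * t := by
    set f : ℕ × ℕ → ℕ × ℕ := fun p => (μ p.1, (sub (μ p.1)).sup id - p.1) with hf
    have hinj : Set.InjOn f SA := by
      intro p hp q hq hpq
      obtain ⟨hpS, hpt⟩ := hp
      obtain ⟨hqS, hqt⟩ := hq
      have h1 : μ p.1 = μ q.1 := congrArg Prod.fst hpq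
      have h2 : (sub (μ p.1)).sup id - p.1 = (sub (μ q.1)).sup id - q.1 :=
        congrArg Prod.snd hpq
      have hpB : p.1 ≤ (sub (μ p.1)).sup id := Finset.le_sup (f := id) (hμ _ hpS.1).2
      have hqB : q.1 ≤ (sub (μ q.1)).sup id := Finset.le_sup (f := id) (hμ _ hqS.1).2
      rw [← h1] at hqB h2
      have h3 : p.1 = q.1 := by omega
      exact Prod.ext h3 (by rw [hpt, hqt, h3])
    have hmaps : f '' SA ⊆ ↑(Finset.Icc 1 M ×ˢ Finset.range t) := by
      rintro _ ⟨p, hp, rfl⟩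
      obtain ⟨hpS, hpt⟩ := hp
      obtain ⟨h1, h2, h3⟩ := hpS
      simp only [Finset.coe_product, Set.mem_prod, Finset.mem_coe, Finset.mem_range, hf]
      refine ⟨(hμ _ h1).1, ?_⟩
      obtain ⟨lo, hi, hsub⟩ := hicc (μ p.1) (hμ _ h1).1
      have hk : p.1 ∈ sub (μ p.1) := (hμ _ h1).2
      have hnotin : p.1 + t ∉ sub (μ p.1) := by
        intro hin
        exact hA1 p ⟨h1, h2, h3⟩ hpt
          (huniq p.2 h2 (μ p.1) (hμ _ h1).1 (by rw [hpt]; exact hin))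
      rw [hsub] at hk hnotin
      rw [Finset.mem_Icc] at hk
      have hhi : hi < p.1 + t := by
        by_contra hle
        push_neg at hle
        exact hnotin (Finset.mem_Icc.mpr ⟨by omega, hle⟩)
      have hsup : (sub (μ p.1)).sup id ≤ hi := by
        rw [hsub]
        exact Finset.sup_le fun x hx => (Finset.mem_Icc.mp hx).2
      omega
    calc SA.ncard = (f '' SA).ncard :=
          (Set.ncard_image_of_injOn hinj).symm
      _ ≤ (↑(Finset.Icc 1 M ×ˢ Finset.range t) : Set (ℕ × ℕ)).ncard :=
          Set.ncard_le_ncard hmaps (Finset.finite_toSet _)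
      _ = (Finset.Icc 1 M ×ˢ Finset.range t).card := Set.ncard_coe_finset _
      _ = M * t := by simp [Finset.card_product, Nat.card_Icc]
  have hSB : SB.ncard ≤ M * M := by
    set f : ℕ × ℕ → ℕ × ℕ := fun p => (μ p.1, μ p.2) with hf
    have hinj : Set.InjOn f SB := by
      intro p hp q hq hpq
      obtain ⟨⟨hp1, hp2, hp3⟩, hpt⟩ := hp
      obtain ⟨⟨hq1, hq2, hq3⟩, hqt⟩ := hq
      have h1 : μ p.1 = μ q.1 := congrArg Prod.fst hpq
      have h2 : μ p.2 = μ q.2 := congrArg Prod.snd hpq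
      rw [h1, h2] at hp3
      have hX := mul_left_cancel₀ hG (hp3.trans hq3.symm)
      have hY : (2:ℤ)^(p.1+t) - 2^p.2 = 2^(q.1+t) - 2^q.2 := by linarith
      have := two_pow_sub_inj (Ne.symm hpt) hY
      exact Prod.ext (by omega) this.2
    have hmaps : f '' SB ⊆ ↑(Finset.Icc 1 M ×ˢ Finset.Icc 1 M) := by
      rintro _ ⟨p, hp, rfl⟩
      obtain ⟨⟨hp1, hp2, _⟩, _⟩ := hp
      simp only [Finset.coe_product, Set.mem_prod, Finset.mem_coe, hf]
      exact ⟨(hμ _ hp1).1, (hμ _ hp2).1⟩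
    calc SB.ncard = (f '' SB).ncard := (Set.ncard_image_of_injOn hinj).symm
      _ ≤ (↑(Finset.Icc 1 M ×ˢ Finset.Icc 1 M) : Set (ℕ × ℕ)).ncard :=
          Set.ncard_le_ncard hmaps (Finset.finite_toSet _)
      _ = (Finset.Icc 1 M ×ˢ Finset.Icc 1 M).card := Set.ncard_coe_finset _
      _ = M * M := by simp [Finset.card_product, Nat.card_Icc]
  calc S.ncard = (SA ∪ SB).ncard := by rw [← hsplit]
    _ ≤ SA.ncard + SB.ncard :=
        Set.ncard_union_le _ _
    _ ≤ M * t + M * M := Nat.add_le_add hSA hSB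
    _ = M * M + M * t := by ring

/-- Lemma 2.1 (iii)(b): if `a/b = 2^r` with `r ≠ 0` and `c ≥ 0` is not of the form
`2^(2^(i^4)) b m (2^r - 1)` for any `m ∈ {1, …, M(i)}`, then the number of solutions
`k, ℓ ∈ Δ_i` of `a n_k - b n_ℓ = c` is `O(i²)`, uniformly in `c`. -/
theorem statement4 (E : ExplicitConstruction) (a b : ℕ) (ha : 1 ≤ a) (hb : 1 ≤ b)
    (r : ℤ) (hr : r ≠ 0) (hpow : (a : ℝ) / (b : ℝ) = (2:ℝ) ^ r) :
    ∃ C : ℝ, ∀ i : ℕ, 1 ≤ i → ∀ c : ℤ, 0 ≤ c →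
      (¬ ∃ m ∈ Finset.Icc 1 (Mfun E.ε i),
          (c : ℝ) = (2:ℝ) ^ 2 ^ i ^ 4 * b * m * ((2:ℝ) ^ r - 1)) →
      ({p : ℕ × ℕ | p.1 ∈ Block E.R i ∧ p.2 ∈ Block E.R i ∧
          (a : ℤ) * (E.n p.1 : ℤ) - (b : ℤ) * (E.n p.2 : ℤ) = c}.ncard : ℝ)
        ≤ C * (i : ℝ) ^ 2 := by
    classical
  obtain ⟨hε0, hε1⟩ := E.hε
  set t := r.natAbs with htdef
  have ht1 : 1 ≤ t := Int.natAbs_pos.mpr hr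
  refine ⟨1 + (t : ℝ), ?_⟩
  intro i hi c hc0 hcform
  set M := Mfun E.ε i with hMdef
  -- the part-index function
  set μ : ℕ → ℕ := fun k =>
    if h : ∃ m, m ∈ Finset.Icc 1 M ∧ k ∈ E.sub i m then h.choose else 0 with hμdef
  have hμ : ∀ k ∈ Block E.R i, μ k ∈ Finset.Icc 1 M ∧ k ∈ E.sub i (μ k) := by
    intro k hk
    have hex : ∃ m, m ∈ Finset.Icc 1 M ∧ k ∈ E.sub i m := by
      have h2 : k ∈ (Finset.Icc 1 M).biUnion (E.sub i) := by
        rw [← E.hpart i hi]; exact hk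
      rw [Finset.mem_biUnion] at h2
      obtain ⟨m, hm, hkm⟩ := h2
      exact ⟨m, hm, hkm⟩
    rw [hμdef]
    simp only [dif_pos hex]
    exact ⟨hex.choose_spec.1, hex.choose_spec.2⟩
  have huniq : ∀ k ∈ Block E.R i, ∀ m ∈ Finset.Icc 1 M, k ∈ E.sub i m → m = μ k := by
    intro k hk m hm hkm
    obtain ⟨hm1, hm2⟩ := hμ k hk
    rcases lt_trichotomy m (μ k) with h | h | h
    · exact absurd (E.horder i hi m hm (μ k) hm1 h k hkm k hm2) (lt_irrefl k)
    · exact h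
    · exact absurd (E.horder i hi (μ k) hm1 m hm h k hm2 k hkm) (lt_irrefl k)
  have hMi : M ≤ i := by
    have h1 : (1:ℝ) ≤ (i:ℝ) := by exact_mod_cast hi
    have h2 : ((i:ℝ)) ^ (1 - E.ε) ≤ (i:ℝ) := by
      calc ((i:ℝ)) ^ (1 - E.ε) ≤ (i:ℝ) ^ (1:ℝ) :=
            Real.rpow_le_rpow_of_exponent_le h1 (by linarith)
        _ = (i:ℝ) := Real.rpow_one _
    exact Nat.ceil_le.mpr h2
  set N : ℕ := 2 ^ i ^ 4 with hNdef
  set S := {p : ℕ × ℕ | p.1 ∈ Block E.R i ∧ p.2 ∈ Block E.R i ∧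
      (a : ℤ) * (E.n p.1 : ℤ) - (b : ℤ) * (E.n p.2 : ℤ) = c} with hSdef
  have hfinal : S.ncard ≤ M * M + M * t → (S.ncard : ℝ) ≤ (1 + (t:ℝ)) * (i:ℝ)^2 := by
    intro hcnt
    have hnat : M * M + M * t ≤ (1 + t) * i ^ 2 := by
      have h1 : M * M ≤ i * i := Nat.mul_le_mul hMi hMi
      have h2 : M * t ≤ i * t := Nat.mul_le_mul_right t hMi
      have h3 : i * t ≤ i * i * t := Nat.mul_le_mul_right t (Nat.le_mul_of_pos_left i hi)
      calc M * M + M * t ≤ i * i + i * i * t := by omega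
        _ = (1 + t) * i ^ 2 := by ring
    calc (S.ncard : ℝ) ≤ ((M * M + M * t : ℕ) : ℝ) := by exact_mod_cast hcnt
      _ ≤ (((1 + t) * i ^ 2 : ℕ) : ℝ) := by exact_mod_cast hnat
      _ = (1 + (t:ℝ)) * (i:ℝ) ^ 2 := by push_cast; ring
  apply hfinal
  rcases hr.lt_or_gt with hneg | hpos
  · -- r < 0 : b = a * 2^t
    have hrt : (t:ℤ) = -r := by omega
    have h2r : (2:ℝ) ^ r = ((2:ℝ) ^ t)⁻¹ := by
      rw [show r = -(t:ℤ) by omega, zpow_neg, zpow_natCast]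
    have hba : b = a * 2 ^ t := by
      have hb0 : (b:ℝ) ≠ 0 := Nat.cast_ne_zero.mpr (by omega)
      have h2t0 : ((2:ℝ) ^ t) ≠ 0 := by positivity
      rw [h2r, div_eq_iff hb0] at hpow
      have : (a:ℝ) * 2 ^ t = b := by field_simp at hpow; linarith
      exact_mod_cast this.symm
    have hab2 : (b:ℤ) = (a:ℤ) * 2 ^ t := by exact_mod_cast hba
    set G : ℤ := -((a:ℤ) * 2 ^ N) with hGdef
    have hG : G ≠ 0 := by
      rw [hGdef]
      have : (0:ℤ) < (a:ℤ) * 2 ^ N := by positivity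
      omega
    have hswap : Prod.swap '' S = {p : ℕ × ℕ | p.1 ∈ Block E.R i ∧ p.2 ∈ Block E.R i ∧
        G * (2^(p.1+t) - 2^p.2 + 2^t * (μ p.1 : ℤ) - (μ p.2 : ℤ)) = c} := by
      rw [Set.image_swap_eq_preimage_swap]
      ext p
      simp only [Set.mem_preimage, hSdef, Set.mem_setOf_eq, Prod.fst_swap, Prod.snd_swap]
      constructor
      · rintro ⟨h2, h1, h3⟩
        refine ⟨h1, h2, ?_⟩
        have e1 : E.n p.1 = 2 ^ N * (2 ^ p.1 + μ p.1) :=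
          E.hn i hi (μ p.1) (hμ p.1 h1).1 p.1 (hμ p.1 h1).2
        have e2 : E.n p.2 = 2 ^ N * (2 ^ p.2 + μ p.2) :=
          E.hn i hi (μ p.2) (hμ p.2 h2).1 p.2 (hμ p.2 h2).2
        rw [e1, e2] at h3
        rw [← h3, hGdef]
        push_cast
        rw [hab2, pow_add]
        ring
      · rintro ⟨h1, h2, h3⟩
        refine ⟨h2, h1, ?_⟩
        have e1 : E.n p.1 = 2 ^ N * (2 ^ p.1 + μ p.1) :=
          E.hn i hi (μ p.1) (hμ p.1 h1).1 p.1 (hμ p.1 h1).2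
        have e2 : E.n p.2 = 2 ^ N * (2 ^ p.2 + μ p.2) :=
          E.hn i hi (μ p.2) (hμ p.2 h2).1 p.2 (hμ p.2 h2).2
        rw [e1, e2]
        rw [← h3, hGdef]
        push_cast
        rw [hab2, pow_add]
        ring
    have hcard : S.ncard = (Prod.swap '' S).ncard :=
      (Set.ncard_image_of_injective S Prod.swap_injective).symm
    rw [hcard, hswap]
    apply core_count (Block E.R i) M t (E.sub i) μ hμ (E.hconsec i hi) huniq G c hG
    intro m hm heq
    have hm1 : 1 ≤ m := (Finset.mem_Icc.mp hm).1
    have hpos1 : (0:ℤ) < (a:ℤ) * 2 ^ N * ((2^t - 1) * m) := by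
      have t1 : (0:ℤ) < (a:ℤ) := by exact_mod_cast ha
      have t2 : (0:ℤ) < 2 ^ N := by positivity
      have t3 : (1:ℤ) < 2 ^ t := one_lt_pow₀ (by norm_num) (by omega)
      have t4 : (0:ℤ) < (m:ℤ) := by exact_mod_cast hm1
      have := mul_pos (mul_pos t1 t2) (mul_pos (by linarith : (0:ℤ) < 2^t - 1) t4)
      exact this
    rw [hGdef] at heq
    have : c < 0 := by
      rw [heq]
      have : -((a:ℤ) * 2 ^ N) * ((2^t - 1) * m) = -((a:ℤ) * 2 ^ N * ((2^t - 1) * m)) := by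
        ring
      rw [this]
      omega
    omega
  · -- r > 0 : a = b * 2^t
    have hrt : (t:ℤ) = r := by omega
    have h2r : (2:ℝ) ^ r = (2:ℝ) ^ t := by rw [← hrt, zpow_natCast]
    have hab : a = b * 2 ^ t := by
      have hb0 : (b:ℝ) ≠ 0 := Nat.cast_ne_zero.mpr (by omega)
      rw [h2r, div_eq_iff hb0] at hpow
      have : (a:ℝ) = (b:ℝ) * 2 ^ t := by linarith
      exact_mod_cast this
    have hab2 : (a:ℤ) = (b:ℤ) * 2 ^ t := by exact_mod_cast hab
    set G : ℤ := (b:ℤ) * 2 ^ N with hGdef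
    have hG : G ≠ 0 := by
      rw [hGdef]
      have : (0:ℤ) < (b:ℤ) * 2 ^ N := by positivity
      omega
    have hseteq : S = {p : ℕ × ℕ | p.1 ∈ Block E.R i ∧ p.2 ∈ Block E.R i ∧
        G * (2^(p.1+t) - 2^p.2 + 2^t * (μ p.1 : ℤ) - (μ p.2 : ℤ)) = c} := by
      ext p
      simp only [hSdef, Set.mem_setOf_eq]
      have key : ∀ h1 : p.1 ∈ Block E.R i, ∀ h2 : p.2 ∈ Block E.R i,
          (a : ℤ) * (E.n p.1 : ℤ) - (b : ℤ) * (E.n p.2 : ℤ) =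
          G * (2^(p.1+t) - 2^p.2 + 2^t * (μ p.1 : ℤ) - (μ p.2 : ℤ)) := by
        intro h1 h2
        have e1 : E.n p.1 = 2 ^ N * (2 ^ p.1 + μ p.1) :=
          E.hn i hi (μ p.1) (hμ p.1 h1).1 p.1 (hμ p.1 h1).2
        have e2 : E.n p.2 = 2 ^ N * (2 ^ p.2 + μ p.2) :=
          E.hn i hi (μ p.2) (hμ p.2 h2).1 p.2 (hμ p.2 h2).2
        rw [e1, e2, hGdef]
        push_cast
        rw [hab2, pow_add]
        ring
      constructor
      · rintro ⟨h1, h2, h3⟩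
        exact ⟨h1, h2, by rw [← key h1 h2]; exact h3⟩
      · rintro ⟨h1, h2, h3⟩
        exact ⟨h1, h2, by rw [key h1 h2]; exact h3⟩
    rw [hseteq]
    apply core_count (Block E.R i) M t (E.sub i) μ hμ (E.hconsec i hi) huniq G c hG
    intro m hm heq
    apply hcform
    refine ⟨m, hm, ?_⟩
    rw [h2r, heq, hGdef]
    push_cast
    ring
end
end

section
/- Let (m_k)_{k≥1} be a sequence of positive integers satisfying m_{k+1}/m_k ≥ q for all k, where q > 1. Then there exists a constant C, depending only on q, such that for every integer c ≥ 0 and every N ∈ ℕ one has #{(k,ℓ) : 1 ≤ k,ℓ ≤ N, k ≠ ℓ, m_k − m_ℓ = c} ≤ C. -/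
open Finset

set_option maxHeartbeats 800000 in
/-- Zygmund's lemma: for a lacunary sequence of positive integers with growth factor
`q > 1`, the number of solutions `1 ≤ k, ℓ ≤ N`, `k ≠ ℓ`, of `m_k - m_ℓ = c` is bounded
by a constant depending only on `q`, uniformly in `c ≥ 0` and `N`. -/
theorem statement6 (q : ℝ) (hq : 1 < q) :
    ∃ C : ℕ, ∀ m : ℕ → ℕ,
      (∀ k, 1 ≤ k → 0 < m k) →
      (∀ k, 1 ≤ k → q ≤ (m (k + 1) : ℝ) / (m k : ℝ)) →
      ∀ c : ℤ, 0 ≤ c → ∀ N : ℕ,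
        ((Finset.Icc 1 N ×ˢ Finset.Icc 1 N).filter
            (fun p => p.1 ≠ p.2 ∧ (m p.1 : ℤ) - (m p.2 : ℤ) = c)).card ≤ C := by
  have hq1 : (0:ℝ) < q - 1 := sub_pos.mpr hq
  obtain ⟨D, hD⟩ := pow_unbounded_of_one_lt (1 / (q - 1)) hq
  have hqD : 1 < (q - 1) * q ^ D := by
    rw [div_lt_iff₀ hq1] at hD
    nlinarith
  refine ⟨D + 1, ?_⟩
  intro m hm hgrow c hc N
  -- growth lemma
  have key : ∀ ℓ n, 1 ≤ ℓ → (m ℓ : ℝ) * q ^ n ≤ m (ℓ + n) := by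
    intro ℓ n hℓ
    induction n with
    | zero => simp
    | succ n ih =>
      have h1 : 1 ≤ ℓ + n := hℓ.trans (Nat.le_add_right _ _)
      have hpos : (0:ℝ) < m (ℓ + n) := by exact_mod_cast hm _ h1
      have hg := hgrow (ℓ + n) h1
      rw [le_div_iff₀ hpos] at hg
      calc (m ℓ : ℝ) * q ^ (n+1) = (m ℓ * q ^ n) * q := by ring
        _ ≤ (m (ℓ + n) : ℝ) * q :=
            mul_le_mul_of_nonneg_right ih (by linarith)
        _ = q * m (ℓ + n) := by ring
        _ ≤ m (ℓ + n + 1) := hg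
  have smono : ∀ k ℓ, 1 ≤ ℓ → ℓ < k → m ℓ < m k := by
    intro k ℓ hℓ hlt
    have h := key ℓ (k - ℓ) hℓ
    rw [Nat.add_sub_cancel' hlt.le] at h
    have hq0 : (1:ℝ) < q ^ (k - ℓ) := one_lt_pow₀ hq (by omega)
    have hmℓ : (0:ℝ) < m ℓ := by exact_mod_cast hm ℓ hℓ
    have : (m ℓ : ℝ) < m k := by nlinarith
    exact_mod_cast this
  have minj : ∀ a b, 1 ≤ a → 1 ≤ b → m a = m b → a = b := by
    intro a b ha hb hab
    rcases lt_trichotomy a b with h | h | h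
    · exact absurd hab (smono b a ha h).ne
    · exact h
    · exact absurd hab.symm (smono a b hb h).ne
  set S := ((Finset.Icc 1 N ×ˢ Finset.Icc 1 N).filter
      (fun p => p.1 ≠ p.2 ∧ (m p.1 : ℤ) - (m p.2 : ℤ) = c)) with hSdef
  have memS : ∀ p : ℕ × ℕ, p ∈ S →
      1 ≤ p.1 ∧ 1 ≤ p.2 ∧ p.1 ≠ p.2 ∧ (m p.1 : ℤ) - (m p.2 : ℤ) = c := by
    intro p hp
    simp only [hSdef, Finset.mem_filter, Finset.mem_product, Finset.mem_Icc] at hp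
    exact ⟨hp.1.1.1, hp.1.2.1, hp.2.1, hp.2.2⟩
  -- in every solution, ℓ < k
  have hlt : ∀ p : ℕ × ℕ, p ∈ S → p.2 < p.1 := by
    intro p hp
    obtain ⟨h1, h2, hne, heq⟩ := memS p hp
    rcases lt_or_ge p.2 p.1 with h | h
    · exact h
    · have h' : p.2 ≠ p.1 := fun e => hne e.symm
      have : m p.1 < m p.2 := smono p.2 p.1 h1 (lt_of_le_of_ne h (fun e => hne e))
      have : (m p.1 : ℤ) < m p.2 := by exact_mod_cast this
      omega
  rcases Finset.eq_empty_or_nonempty S with hS | hS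
  · simp [hS]
  -- c ≥ 1
  have hc1 : 1 ≤ c := by
    obtain ⟨p, hp⟩ := hS
    obtain ⟨h1, h2, hne, heq⟩ := memS p hp
    have := smono p.1 p.2 h2 (hlt p hp)
    have : (m p.2 : ℤ) < m p.1 := by exact_mod_cast this
    omega
  have hinj : Set.InjOn Prod.fst (S : Set (ℕ × ℕ)) := by
    intro p hp p' hp' hfst
    obtain ⟨h1, h2, hne, heq⟩ := memS p hp
    obtain ⟨h1', h2', hne', heq'⟩ := memS p' hp'
    have hm2 : (m p.2 : ℤ) = m p'.2 := by rw [hfst] at heq; omega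
    have : m p.2 = m p'.2 := by exact_mod_cast hm2
    exact Prod.ext hfst (minj _ _ h2 h2' this)
  set T := S.image Prod.fst with hT
  have hTne : T.Nonempty := hS.image _
  set k0 := T.min' hTne with hk0
  obtain ⟨p0, hp0, hp0k⟩ := Finset.mem_image.mp (T.min'_mem hTne)
  obtain ⟨h01, h02, h0ne, h0eq⟩ := memS p0 hp0
  have hmk0 : (c : ℝ) + 1 ≤ m k0 := by
    have : (m p0.2 : ℤ) ≥ 1 := by exact_mod_cast hm p0.2 h02
    have h : c + 1 ≤ (m p0.1 : ℤ) := by omega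
    rw [hp0k] at h
    exact_mod_cast h
  have hTsub : T ⊆ Finset.Icc k0 (k0 + D) := by
    intro k hk
    obtain ⟨p, hp, hpk⟩ := Finset.mem_image.mp hk
    obtain ⟨h1, h2, hne, heq⟩ := memS p hp
    refine Finset.mem_Icc.mpr ⟨T.min'_le k hk, ?_⟩
    rcases eq_or_lt_of_le (T.min'_le k hk) with h | h
    · omega
    · -- k0 < k
      subst hpk
      have hk01 : 1 ≤ k0 := by rw [hk0]; exact hp0k ▸ h01
      have hk2 : 2 ≤ p.1 := by omega
      set e := p.1 - 1 - k0 with he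
      -- m (p.1 - 1) ≥ m k0 * q ^ e
      have hkey := key k0 e hk01
      have hke : k0 + e = p.1 - 1 := by omega
      rw [hke] at hkey
      -- m p.1 ≥ q * m (p.1 - 1)
      have hg := hgrow (p.1 - 1) (by omega)
      have hpos : (0:ℝ) < m (p.1 - 1) := by exact_mod_cast hm _ (show 1 ≤ p.1 -1 by omega)
      rw [le_div_iff₀ hpos] at hg
      have hk1 : p.1 - 1 + 1 = p.1 := by omega
      rw [hk1] at hg
      -- m p.2 ≤ m (p.1 - 1)
      have hℓ : (m p.2 : ℝ) ≤ m (p.1 - 1) := by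
        rcases eq_or_lt_of_le (show p.2 ≤ p.1 - 1 by have := hlt p hp; omega) with hh | hh
        · rw [hh]
        · exact_mod_cast (smono _ _ h2 hh).le
      -- c = m p.1 - m p.2 (as reals)
      have hceq : (c : ℝ) = (m p.1 : ℝ) - m p.2 := by
        have : ((m p.1 : ℤ) : ℝ) - ((m p.2 : ℤ) : ℝ) = (c : ℝ) := by exact_mod_cast congrArg (fun z : ℤ => (z : ℝ)) heq
        push_cast at this ⊢
        linarith
      have hcR : (1:ℝ) ≤ c := by exact_mod_cast hc1
      have hqe : (0:ℝ) < q ^ e := pow_pos (by linarith) e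
      -- c ≥ (q-1) * q^e * (c+1)
      have hchain : (q - 1) * q ^ e * ((c:ℝ) + 1) ≤ c := by
        have h1' : (q - 1) * (m (p.1 - 1) : ℝ) ≤ (m p.1 : ℝ) - m (p.1 - 1) := by nlinarith
        have h2' : ((c:ℝ) + 1) * q ^ e ≤ m (p.1 - 1) :=
          le_trans (mul_le_mul_of_nonneg_right hmk0 hqe.le) hkey
        nlinarith
      have hlt1 : (q - 1) * q ^ e < 1 := by nlinarith [mul_pos hq1 hqe]
      have : q ^ e < q ^ D := (mul_lt_mul_iff_right₀ hq1).mp (by linarith)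
      have heD : e < D := by
        by_contra hcon
        push_neg at hcon
        exact absurd this (not_lt.mpr (pow_le_pow_right₀ (by linarith) hcon))
      omega
  calc S.card = T.card := (Finset.card_image_of_injOn hinj).symm
    _ ≤ (Finset.Icc k0 (k0 + D)).card := Finset.card_le_card hTsub
    _ = D + 1 := by rw [Nat.card_Icc]; omega
end

section
/- For every N ∈ ℕ and every x ∈ ℝ one has Σ_{k=1}^N (cos(2π(2^k − 1)x) + cos(4π(2^k − 1)x)) = 2·cos(πx)·Σ_{k=1}^N cos(2π(2^k − 3/2)x) + cos(2π(2^{N+1} − 2)x) − 1. -/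
/-! By the product-to-sum formula, `2 cos(πx) cos(2π(2^k - 3/2)x)` splits into the frequencies
`2^k - 1` and `2^k - 2`, while `cos(4π(2^k - 1)x) = cos(2π(2^(k+1) - 2)x)`. So the `2^k - 2` terms
telescope against the doubled ones, leaving the last one and the first, `cos 0 = 1`. -/

open Real Finset

theorem Finset.sum_Icc_one_succ_add {M : Type*} [AddCommMonoid M] (f : ℕ → M) (N : ℕ) :
    ∑ k ∈ Icc 1 N, f (k + 1) + f 1 = ∑ k ∈ Icc 1 N, f k + f (N + 1) := by
  induction N with
  | zero => simp
  | succ n ih =>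
    rw [sum_Icc_succ_top (by omega), sum_Icc_succ_top (by omega), add_right_comm, ih,
      add_right_comm]

theorem two_cos_mul_cos_two_pow_sub_three_halves (k : ℕ) (x : ℝ) :
    2 * cos (π * x) * cos (2 * π * ((2:ℝ) ^ k - 3 / 2) * x)
      = cos (2 * π * ((2:ℝ) ^ k - 1) * x) + cos (2 * π * ((2:ℝ) ^ k - 2) * x) := by
  have hsum : (2 * π * ((2:ℝ) ^ k - 1) * x + 2 * π * ((2:ℝ) ^ k - 2) * x) / 2
      = 2 * π * ((2:ℝ) ^ k - 3 / 2) * x := by ring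
  have hdiff : (2 * π * ((2:ℝ) ^ k - 1) * x - 2 * π * ((2:ℝ) ^ k - 2) * x) / 2 = π * x := by
    ring
  rw [cos_add_cos, hsum, hdiff, mul_right_comm]

theorem cos_four_pi_two_pow_sub_one (k : ℕ) (x : ℝ) :
    cos (4 * π * ((2:ℝ) ^ k - 1) * x) = cos (2 * π * ((2:ℝ) ^ (k + 1) - 2) * x) := by
  congr 1
  ring

/-- The exact trigonometric identity underlying the Erdős–Fortet example, for the
sequence `n_k = 2^k - 1` and the function `f(x) = cos(2πx) + cos(4πx)`. -/
theorem statement12 (N : ℕ) (x : ℝ) :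
    ∑ k ∈ Finset.Icc 1 N,
        (Real.cos (2 * Real.pi * ((2:ℝ) ^ k - 1) * x)
          + Real.cos (4 * Real.pi * ((2:ℝ) ^ k - 1) * x))
      = 2 * Real.cos (Real.pi * x) *
          ∑ k ∈ Finset.Icc 1 N, Real.cos (2 * Real.pi * ((2:ℝ) ^ k - 3 / 2) * x)
        + Real.cos (2 * Real.pi * ((2:ℝ) ^ (N + 1) - 2) * x) - 1 := by
  have telescope := sum_Icc_one_succ_add (fun k ↦ cos (2 * π * ((2:ℝ) ^ k - 2) * x)) N
  have first_term : cos (2 * π * ((2:ℝ) ^ 1 - 2) * x) = 1 := by simp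
  simp only [first_term] at telescope
  simp only [mul_sum, two_cos_mul_cos_two_pow_sub_three_halves, cos_four_pi_two_pow_sub_one,
    sum_add_distrib]
  linarith
end

section
/- For the sequence (n_k)_{k≥1} of the explicit construction, let a, b ∈ ℕ be such that a/b = 2^r for some r ∈ ℤ \ {0}. Then there is a constant C (depending only on ε, R, d, a, b) such that for every i ≥ 1, sup over integers c ≥ 0 of #{(k,ℓ) : k,ℓ ∈ Δ_i, ℓ ≠ k + r, a·n_k − b·n_ℓ = c} is at most C·i². -/
open Real MeasureTheory Filter Finset

noncomputable section

lemma two_pow_add_eq_aux : ∀ n a b c d : ℕ, a + b + c + d = n →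
    2 ^ a + 2 ^ b = 2 ^ c + 2 ^ d → (a = c ∧ b = d) ∨ (a = d ∧ b = c) := by
  intro n
  induction n using Nat.strong_induction_on with
  | _ n ih =>
    intro a b c d hsum h
    have hinj : ∀ x y : ℕ, (2:ℕ) ^ x = 2 ^ y → x = y := fun x y hxy =>
      Nat.pow_right_injective (le_refl 2) hxy
    have l2 : ∀ x : ℕ, 1 ≤ x → 2 ≤ 2 ^ x := fun x hx =>
      Nat.one_lt_two_pow_iff.mpr (by omega)
    have d2 : ∀ x : ℕ, 1 ≤ x → 2 ∣ 2 ^ x := fun x hx => dvd_pow_self 2 (by omega)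
    rcases Nat.eq_zero_or_pos a with rfl | hha <;>
      rcases Nat.eq_zero_or_pos b with rfl | hhb <;>
      rcases Nat.eq_zero_or_pos c with rfl | hhc <;>
      rcases Nat.eq_zero_or_pos d with rfl | hhd <;>
      (try simp only [pow_zero] at h)
    · omega
    · have := l2 d hhd; omega
    · have := l2 c hhc; omega
    · have := l2 c hhc; have := l2 d hhd; omega
    · have := l2 b hhb; omega
    · have : (2:ℕ)^b = 2^d := by omega
      have := hinj b d this; omega
    · have : (2:ℕ)^b = 2^c := by omega
      have := hinj b c this; omega
    · have := d2 b hhb; have := d2 c hhc; have := d2 d hhd; omega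
    · have := l2 a hha; omega
    · have : (2:ℕ)^a = 2^d := by omega
      have := hinj a d this; omega
    · have : (2:ℕ)^a = 2^c := by omega
      have := hinj a c this; omega
    · have := d2 a hha; have := d2 c hhc; have := d2 d hhd; omega
    · have := l2 a hha; have := l2 b hhb; omega
    · have := d2 a hha; have := d2 b hhb; have := d2 d hhd; omega
    · have := d2 a hha; have := d2 b hhb; have := d2 c hhc; omega
    · have ea : (2:ℕ)^a = 2 * 2^(a-1) := by rw [← pow_succ']; congr 1; omega
      have eb : (2:ℕ)^b = 2 * 2^(b-1) := by rw [← pow_succ']; congr 1; omega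
      have ec : (2:ℕ)^c = 2 * 2^(c-1) := by rw [← pow_succ']; congr 1; omega
      have ed : (2:ℕ)^d = 2 * 2^(d-1) := by rw [← pow_succ']; congr 1; omega
      have h' : 2^(a-1) + 2^(b-1) = 2^(c-1) + 2^(d-1) := by omega
      have := ih ((a-1)+(b-1)+(c-1)+(d-1)) (by omega) (a-1) (b-1) (c-1) (d-1) rfl h'
      omega

lemma pow2_sub_inj {s t s' t' : ℕ} (h1 : s ≠ t) (h2 : s' ≠ t')
    (h : (2:ℤ)^s - 2^t = 2^s' - 2^t') : s = s' ∧ t = t' := by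
  have h3 : (2:ℕ)^s + 2^t' = 2^s' + 2^t := by
    have : (2:ℤ)^s + 2^t' = 2^s' + 2^t := by linarith
    exact_mod_cast this
  rcases two_pow_add_eq_aux _ s t' s' t rfl h3 with ⟨hs, ht⟩ | ⟨hs, ht⟩
  · exact ⟨hs, ht.symm⟩
  · exact absurd hs h1

open Classical in
/-- The index `m` of the subinterval containing `k`. -/
def mfAux (E : ExplicitConstruction) (i k : ℕ) : ℕ :=
  if h : ∃ m, m ∈ Finset.Icc 1 (Mfun E.ε i) ∧ k ∈ E.sub i m then h.choose else 0

lemma mfAux_spec (E : ExplicitConstruction) (i k : ℕ) (hi : 1 ≤ i) (hk : k ∈ Block E.R i) :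
    mfAux E i k ∈ Finset.Icc 1 (Mfun E.ε i) ∧ k ∈ E.sub i (mfAux E i k) := by
  rw [E.hpart i hi, Finset.mem_biUnion] at hk
  obtain ⟨m, hm, hkm⟩ := hk
  have hex : ∃ m, m ∈ Finset.Icc 1 (Mfun E.ε i) ∧ k ∈ E.sub i m := ⟨m, hm, hkm⟩
  rw [mfAux, dif_pos hex]
  exact hex.choose_spec

/-- Equation (2.9): if `a/b = 2^r` with `r ≠ 0`, the number of solutions `k, ℓ ∈ Δ_i`
of `a n_k - b n_ℓ = c` with `ℓ ≠ k + r` is `O(i²)`, uniformly in `c ≥ 0`. -/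
theorem statement13 (E : ExplicitConstruction) (a b : ℕ) (ha : 1 ≤ a) (hb : 1 ≤ b)
    (r : ℤ) (hr : r ≠ 0) (hpow : (a : ℝ) / (b : ℝ) = (2:ℝ) ^ r) :
    ∃ C : ℝ, ∀ i : ℕ, 1 ≤ i → ∀ c : ℤ, 0 ≤ c →
      ({p : ℕ × ℕ | p.1 ∈ Block E.R i ∧ p.2 ∈ Block E.R i ∧ (p.2 : ℤ) ≠ (p.1 : ℤ) + r ∧
          (a : ℤ) * (E.n p.1 : ℤ) - (b : ℤ) * (E.n p.2 : ℤ) = c}.ncard : ℝ)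
        ≤ C * (i : ℝ) ^ 2 := by

  classical
  set u := r.toNat with hu
  set v := (-r).toNat with hv
  have hruv : r = (u : ℤ) - (v : ℤ) := by omega
  have hb0 : (b:ℝ) ≠ 0 := Nat.cast_ne_zero.mpr (by omega)
  have habZ : (a:ℤ) * 2^v = (b:ℤ) * 2^u := by
    have h1 : (a:ℝ) = (b:ℝ) * (2:ℝ)^r := by
      field_simp at hpow; linarith [hpow]
    have h2 : (a:ℝ) * 2^(v:ℕ) = (b:ℝ) * 2^(u:ℕ) := by
      rw [h1, show ((2:ℝ)^(v:ℕ)) = (2:ℝ)^((v:ℕ):ℤ) from (zpow_natCast _ _).symm,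
        show ((2:ℝ)^(u:ℕ)) = (2:ℝ)^((u:ℕ):ℤ) from (zpow_natCast _ _).symm,
        mul_assoc, ← zpow_add₀ (two_ne_zero)]
      have h3 : r + (v:ℤ) = (u:ℤ) := by omega
      rw [h3]
    exact_mod_cast h2
  refine ⟨1, fun i hi c hc => ?_⟩
  set M := Mfun E.ε i with hM
  set S : Set (ℕ × ℕ) := {p : ℕ × ℕ | p.1 ∈ Block E.R i ∧ p.2 ∈ Block E.R i ∧
      (p.2 : ℤ) ≠ (p.1 : ℤ) + r ∧
      (a : ℤ) * (E.n p.1 : ℤ) - (b : ℤ) * (E.n p.2 : ℤ) = c} with hS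
  have key : ∀ p ∈ S, (b:ℤ) * 2^(2^(i^4)) * ((2:ℤ)^(u + p.1) - 2^(v + p.2))
      = c * 2^v - (b:ℤ) * 2^(2^(i^4)) *
        (2^u * (mfAux E i p.1 : ℤ) - 2^v * (mfAux E i p.2 : ℤ)) := by
    rintro ⟨k, l⟩ hp
    obtain ⟨hk, hl, hne, heq⟩ := hp
    have hmk := mfAux_spec E i k hi hk
    have hml := mfAux_spec E i l hi hl
    have hnk : E.n k = 2 ^ 2 ^ i ^ 4 * (2 ^ k + mfAux E i k) :=
      E.hn i hi _ hmk.1 k hmk.2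
    have hnl : E.n l = 2 ^ 2 ^ i ^ 4 * (2 ^ l + mfAux E i l) :=
      E.hn i hi _ hml.1 l hml.2
    have hnkZ : (E.n k : ℤ) = 2^(2^(i^4)) * (2^k + (mfAux E i k : ℤ)) := by
      rw [hnk]; push_cast; ring
    have hnlZ : (E.n l : ℤ) = 2^(2^(i^4)) * (2^l + (mfAux E i l : ℤ)) := by
      rw [hnl]; push_cast; ring
    rw [hnkZ, hnlZ] at heq
    simp only []
    rw [pow_add, pow_add]
    linear_combination (2:ℤ)^v * heq
      - ((2:ℤ)^(2^(i^4)) * ((2:ℤ)^k + (mfAux E i k : ℤ))) * habZ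
  have hinj : Set.InjOn (fun p : ℕ × ℕ => (mfAux E i p.1, mfAux E i p.2)) S := by
    rintro ⟨k, l⟩ hp ⟨k', l'⟩ hq hpq
    simp only [Prod.mk.injEq] at hpq
    obtain ⟨h1, h2⟩ := hpq
    have e1 := key (k, l) hp
    have e2 := key (k', l') hq
    simp only at e1 e2
    rw [h1, h2] at e1
    have e3 := e1.trans e2.symm
    have hbT : (b:ℤ) * 2^(2^(i^4)) ≠ 0 := by positivity
    have e4 := mul_left_cancel₀ hbT e3
    have hne1 : u + k ≠ v + l := by
      have h5 := hp.2.2.1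
      omega
    have hne2 : u + k' ≠ v + l' := by
      have h5 := hq.2.2.1
      omega
    obtain ⟨ek, el⟩ := pow2_sub_inj hne1 hne2 e4
    simp only [Prod.mk.injEq]
    omega
  have hMle : M ≤ i := by
    rw [hM, Mfun]
    refine Nat.ceil_le.mpr ?_
    calc (i:ℝ) ^ (1 - E.ε) ≤ (i:ℝ) ^ (1:ℝ) :=
          Real.rpow_le_rpow_of_exponent_le (by exact_mod_cast hi) (by linarith [E.hε.1])
      _ = (i:ℝ) := Real.rpow_one _
  have himg : (fun p : ℕ × ℕ => (mfAux E i p.1, mfAux E i p.2)) '' S ⊆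
      ↑(Finset.Icc 1 M ×ˢ Finset.Icc 1 M) := by
    rintro q ⟨p, hp, rfl⟩
    rw [Finset.mem_coe, Finset.mem_product]
    exact ⟨(mfAux_spec E i p.1 hi hp.1).1, (mfAux_spec E i p.2 hi hp.2.1).1⟩
  have hcount : S.ncard ≤ M * M := by
    rw [← Set.ncard_image_of_injOn hinj]
    have h6 := Set.ncard_le_ncard himg (Finset.finite_toSet _)
    rw [Set.ncard_coe_finset, Finset.card_product, Nat.card_Icc] at h6
    simpa using h6
  have : (S.ncard : ℝ) ≤ (i:ℝ) * (i:ℝ) := by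
    calc (S.ncard : ℝ) ≤ ((M * M : ℕ) : ℝ) := by exact_mod_cast hcount
      _ ≤ (i:ℝ) * (i:ℝ) := by
          push_cast
          have : (M:ℝ) ≤ (i:ℝ) := by exact_mod_cast hMle
          nlinarith [Nat.cast_nonneg (α := ℝ) M]
  rw [hS] at this
  nlinarith [this]
end
end

section
/- In the explicit construction, assume in addition that i ≥ 1 is large enough that #Δ_i^{(m)} ≥ d for every m ∈ {1,…,M(i)}. Let f(x) := Σ_{j=0}^{d−1} cos(2π·2^j·x) and define ν_k := 2^k + m for k ∈ Δ_i^{(m)}. Then for every x ∈ ℝ, |Σ_{k∈Δ_i} f(ν_k x) − Σ_{m=1}^{M(i)} ((Σ_{j=0}^{d−1} cos(2π·2^j·m·x))·(Σ_{k∈Δ_i^{(m)}} cos(2π·2^k·x)) − (Σ_{j=0}^{d−1} sin(2π·2^j·m·x))·(Σ_{k∈Δ_i^{(m)}} sin(2π·2^k·x)))| ≤ d²·M(i). -/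
open Real MeasureTheory Filter Finset

noncomputable section

/-!
Writing `θ_j = 2π 2^j m x` and `φ_k = 2π 2^k x`, the relation `2^j 2^k = 2^(j+k)` gives
`cos(2π 2^j ν_k x) = cos(θ_j + φ_(j+k))`, whereas the product on the right expands by the
addition formula to `∑_j ∑_k cos(θ_j + φ_k)`. On an interval of `k`'s, shifting the index by `j`
changes the inner sum by at most `2j`, and `∑_(j<d) 2j ≤ d²`; summing over the `M(i)` sub-blocks
gives the bound.
-/

lemma abs_sum_sub_sum_le_card_sdiff {α : Type*} [DecidableEq α] (A B : Finset α) (g : α → ℝ)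
    (hg : ∀ t, |g t| ≤ 1) :
    |∑ t ∈ A, g t - ∑ t ∈ B, g t| ≤ #(A \ B) + #(B \ A) := by
  have abs_sum_le_card : ∀ C : Finset α, |∑ t ∈ C, g t| ≤ #C := fun C =>
    calc |∑ t ∈ C, g t| ≤ ∑ t ∈ C, |g t| := abs_sum_le_sum_abs _ _
      _ ≤ ∑ _t ∈ C, (1 : ℝ) := sum_le_sum fun t _ => hg t
      _ = #C := by simp
  have hsplit : ∑ t ∈ A, g t - ∑ t ∈ B, g t = ∑ t ∈ A \ B, g t - ∑ t ∈ B \ A, g t := by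
    rw [← sum_inter_add_sum_sdiff A B g, ← sum_inter_add_sum_sdiff B A g, inter_comm]
    ring
  rw [hsplit]
  exact (abs_sub _ _).trans (add_le_add (abs_sum_le_card _) (abs_sum_le_card _))

lemma abs_sum_Icc_shift_sub_le (lo hi j : ℕ) (g : ℕ → ℝ) (hg : ∀ t, |g t| ≤ 1) :
    |∑ k ∈ Icc lo hi, g (j + k) - ∑ k ∈ Icc lo hi, g k| ≤ 2 * j := by
  have hshift : ∑ k ∈ Icc lo hi, g (j + k) = ∑ t ∈ Icc (j + lo) (j + hi), g t := by
    rw [← map_add_left_Icc, sum_map]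
    rfl
  have hright : #(Icc (j + lo) (j + hi) \ Icc lo hi) ≤ j :=
    calc #(Icc (j + lo) (j + hi) \ Icc lo hi) ≤ #(Ioc hi (hi + j)) :=
          card_le_card fun t ht => by simp only [Finset.mem_sdiff, mem_Icc, mem_Ioc] at ht ⊢; omega
      _ = j := by simp
  have hleft : #(Icc lo hi \ Icc (j + lo) (j + hi)) ≤ j :=
    calc #(Icc lo hi \ Icc (j + lo) (j + hi)) ≤ #(Ico lo (lo + j)) :=
          card_le_card fun t ht => by simp only [Finset.mem_sdiff, mem_Icc, mem_Ico] at ht ⊢; omega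
      _ = j := by simp
  rw [hshift]
  calc _ ≤ (#(Icc (j + lo) (j + hi) \ Icc lo hi) : ℝ) + #(Icc lo hi \ Icc (j + lo) (j + hi)) :=
        abs_sum_sub_sum_le_card_sdiff _ _ g hg
    _ ≤ j + j := by exact_mod_cast add_le_add hright hleft
    _ = 2 * j := (two_mul _).symm

lemma sum_range_two_mul_le_sq (d : ℕ) : ∑ j ∈ range d, 2 * (j : ℝ) ≤ (d : ℝ) ^ 2 := by
  have hnat : ∑ j ∈ range d, 2 * j ≤ d ^ 2 := by
    rw [← mul_sum, mul_comm, sum_range_id_mul_two, sq]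
    exact Nat.mul_le_mul_left _ (Nat.sub_le _ _)
  exact_mod_cast hnat

lemma abs_sum_Icc_sum_cos_sub_product_le_sq (d lo hi : ℕ) (a x : ℝ) :
    |∑ k ∈ Icc lo hi, ∑ j ∈ range d, cos (2 * π * 2 ^ j * ((2 ^ k + a) * x))
      - ((∑ j ∈ range d, cos (2 * π * 2 ^ j * a * x)) *
           (∑ k ∈ Icc lo hi, cos (2 * π * 2 ^ k * x))
         - (∑ j ∈ range d, sin (2 * π * 2 ^ j * a * x)) *
           (∑ k ∈ Icc lo hi, sin (2 * π * 2 ^ k * x)))| ≤ (d : ℝ) ^ 2 := by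
  set g : ℕ → ℕ → ℝ := fun j k => cos (2 * π * 2 ^ j * a * x + 2 * π * 2 ^ k * x)
  have hlhs : ∑ k ∈ Icc lo hi, ∑ j ∈ range d, cos (2 * π * 2 ^ j * ((2 ^ k + a) * x))
      = ∑ j ∈ range d, ∑ k ∈ Icc lo hi, g j (j + k) := by
    rw [sum_comm]
    refine sum_congr rfl fun j _ => sum_congr rfl fun k _ => congrArg cos ?_
    rw [pow_add]
    ring
  have hrhs : (∑ j ∈ range d, cos (2 * π * 2 ^ j * a * x)) *
           (∑ k ∈ Icc lo hi, cos (2 * π * 2 ^ k * x))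
         - (∑ j ∈ range d, sin (2 * π * 2 ^ j * a * x)) *
           (∑ k ∈ Icc lo hi, sin (2 * π * 2 ^ k * x))
      = ∑ j ∈ range d, ∑ k ∈ Icc lo hi, g j k := by
    simp only [g, cos_add, sum_mul_sum, ← sum_sub_distrib]
  rw [hlhs, hrhs, ← sum_sub_distrib]
  calc |∑ j ∈ range d, (∑ k ∈ Icc lo hi, g j (j + k) - ∑ k ∈ Icc lo hi, g j k)|
      ≤ ∑ j ∈ range d, |∑ k ∈ Icc lo hi, g j (j + k) - ∑ k ∈ Icc lo hi, g j k| :=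
        abs_sum_le_sum_abs _ _
    _ ≤ ∑ j ∈ range d, 2 * (j : ℝ) :=
        sum_le_sum fun j _ => abs_sum_Icc_shift_sub_le lo hi j (g j) fun _ => abs_cos_le_one _
    _ ≤ (d : ℝ) ^ 2 := sum_range_two_mul_le_sq d

lemma ExplicitConstruction.sum_block (E : ExplicitConstruction) {i : ℕ} (hi : 1 ≤ i)
    (g : ℕ → ℝ) :
    ∑ k ∈ Block E.R i, g k = ∑ m ∈ Icc 1 (Mfun E.ε i), ∑ k ∈ E.sub i m, g k := by
  have hdisj : Set.PairwiseDisjoint ↑(Icc 1 (Mfun E.ε i)) (E.sub i) := by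
    intro m hm m' hm' hne
    refine Finset.disjoint_left.2 fun k hk hk' => ?_
    rcases lt_or_gt_of_ne hne with h | h
    · exact lt_irrefl k (E.horder i hi m hm m' hm' h k hk k hk')
    · exact lt_irrefl k (E.horder i hi m' hm' m hm h k hk' k hk)
  rw [E.hpart i hi, sum_biUnion hdisj]

theorem statement15_general (E : ExplicitConstruction) (i : ℕ) (hi : 1 ≤ i)
    (ν : ℕ → ℕ)
    (hν : ∀ m ∈ Finset.Icc 1 (Mfun E.ε i), ∀ k ∈ E.sub i m, ν k = 2 ^ k + m)
    (f : ℝ → ℝ)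
    (hf : ∀ x, f x = ∑ j ∈ Finset.range E.d, Real.cos (2 * Real.pi * 2 ^ j * x)) :
    ∀ x : ℝ,
      |∑ k ∈ Block E.R i, f ((ν k : ℝ) * x)
        - ∑ m ∈ Finset.Icc 1 (Mfun E.ε i),
            ((∑ j ∈ Finset.range E.d, Real.cos (2 * Real.pi * 2 ^ j * m * x)) *
               (∑ k ∈ E.sub i m, Real.cos (2 * Real.pi * 2 ^ k * x))
             - (∑ j ∈ Finset.range E.d, Real.sin (2 * Real.pi * 2 ^ j * m * x)) *
               (∑ k ∈ E.sub i m, Real.sin (2 * Real.pi * 2 ^ k * x)))|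
        ≤ (E.d : ℝ) ^ 2 * (Mfun E.ε i : ℝ) := by
  intro x
  rw [E.sum_block hi, ← sum_sub_distrib]
  have hsub : ∀ m ∈ Icc 1 (Mfun E.ε i), |∑ k ∈ E.sub i m, f ((ν k : ℝ) * x)
        - ((∑ j ∈ range E.d, cos (2 * π * 2 ^ j * m * x)) *
             (∑ k ∈ E.sub i m, cos (2 * π * 2 ^ k * x))
           - (∑ j ∈ range E.d, sin (2 * π * 2 ^ j * m * x)) *
             (∑ k ∈ E.sub i m, sin (2 * π * 2 ^ k * x)))| ≤ (E.d : ℝ) ^ 2 := by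
    intro m hm
    obtain ⟨lo, hi', hinterval⟩ := E.hconsec i hi m hm
    have hfν : ∀ k ∈ E.sub i m, f ((ν k : ℝ) * x)
        = ∑ j ∈ range E.d, cos (2 * π * 2 ^ j * ((2 ^ k + m) * x)) := fun k hk => by
      rw [hf, hν m hm k hk]
      push_cast
      rfl
    rw [sum_congr rfl hfν, hinterval]
    exact abs_sum_Icc_sum_cos_sub_product_le_sq E.d lo hi' m x
  calc _ ≤ ∑ m ∈ Icc 1 (Mfun E.ε i), _ := abs_sum_le_sum_abs _ _
    _ ≤ ∑ _m ∈ Icc 1 (Mfun E.ε i), (E.d : ℝ) ^ 2 := sum_le_sum hsub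
    _ = (E.d : ℝ) ^ 2 * (Mfun E.ε i : ℝ) := by simp [mul_comm]

/-- The decomposition (4.8)–(4.11): with `f(x) = ∑_{j<d} cos(2π 2^j x)` and
`ν_k = 2^k + m` for `k ∈ Δ_i^(m)`, if every sub-block has at least `d` elements, then
`∑_{k ∈ Δ_i} f(ν_k x)` agrees with
`∑_m (∑_j cos(2π 2^j m x))(∑_{k ∈ Δ_i^(m)} cos(2π 2^k x))
   - (∑_j sin(2π 2^j m x))(∑_{k ∈ Δ_i^(m)} sin(2π 2^k x))`
up to an error of at most `d² M(i)`, uniformly in `x`. -/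
theorem statement15 (E : ExplicitConstruction) (i : ℕ) (hi : 1 ≤ i)
    (hbig : ∀ m ∈ Finset.Icc 1 (Mfun E.ε i), E.d ≤ (E.sub i m).card)
    (ν : ℕ → ℕ)
    (hν : ∀ m ∈ Finset.Icc 1 (Mfun E.ε i), ∀ k ∈ E.sub i m, ν k = 2 ^ k + m)
    (f : ℝ → ℝ)
    (hf : ∀ x, f x = ∑ j ∈ Finset.range E.d, Real.cos (2 * Real.pi * 2 ^ j * x)) :
    ∀ x : ℝ,
      |∑ k ∈ Block E.R i, f ((ν k : ℝ) * x)
        - ∑ m ∈ Finset.Icc 1 (Mfun E.ε i),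
            ((∑ j ∈ Finset.range E.d, Real.cos (2 * Real.pi * 2 ^ j * m * x)) *
               (∑ k ∈ E.sub i m, Real.cos (2 * Real.pi * 2 ^ k * x))
             - (∑ j ∈ Finset.range E.d, Real.sin (2 * Real.pi * 2 ^ j * m * x)) *
               (∑ k ∈ E.sub i m, Real.sin (2 * Real.pi * 2 ^ k * x)))|
        ≤ (E.d : ℝ) ^ 2 * (Mfun E.ε i : ℝ) :=
  statement15_general E i hi ν hν f hf
end
end

section
/- In the explicit construction with f(x) := Σ_{j=0}^{d−1} cos(2π·2^j·x), for each i ≥ 1 let 𝔉_i be the σ-algebra on [0,1] generated by the intervals [(a−1)/2^(2^((i+1)⁴)), a/2^(2^((i+1)⁴))), a = 1, …, 2^(2^((i+1)⁴)); let Y_i(x) := Σ_{k∈Δ_i} f(n_k x), let Z_i := E[Y_i | 𝔉_i] (conditional expectation with respect to Lebesgue measure on [0,1]), and let A_i := {x ∈ [0,1] : |Z_i(x)| ≥ (d·√ε/2 − 2)·√(2·R^i·log log(R^i)) − 2·d²·i − 3}. Then the sets A_1, A_2, A_3, … are mutually (stochastically) independent with respect to Lebesgue measure on [0,1]. -/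
open Real MeasureTheory Filter Finset

noncomputable section

/-- The σ-algebra `𝔉_i` generated by the dyadic intervals
`[(a-1)/2^(2^((i+1)^4)), a/2^(2^((i+1)^4)))`, `a = 1, …, 2^(2^((i+1)^4))`. -/
def Ffield (i : ℕ) : MeasurableSpace ℝ :=
  MeasurableSpace.generateFrom
    {S : Set ℝ | ∃ a : ℕ, 1 ≤ a ∧ a ≤ 2 ^ 2 ^ (i + 1) ^ 4 ∧
      S = Set.Ico (((a : ℝ) - 1) / 2 ^ 2 ^ (i + 1) ^ 4) ((a : ℝ) / 2 ^ 2 ^ (i + 1) ^ 4)}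

/-! Write `scale i = 2^(2^(i⁴))`. Every `n_k` with `k ∈ Δ_i` is a multiple of `scale i` and `f`
is `1`-periodic, so `Y_i` is `1 / scale i`-periodic. On an atom `[b, b + 1) / scale (i + 1)` of
`𝔉_i` the conditional expectation `Z_i` equals the mean of `Y_i`, so by periodicity it depends
only on `b mod scale (i + 1) / scale i`. Hence on `[0, 1)` the event `A_i` is decided by the
binary digits of `x` in positions `2^(i⁴) + 1, …, 2^((i+1)⁴)`, while `A_1, …, A_{i-1}` are decided
by the first `2^(i⁴)` digits. Disjoint blocks of binary digits are independent under Lebesgue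
measure, and induction on the largest index gives the product formula. -/

namespace DyadicDigits

open scoped ENNReal

def floorEvent (N : ℕ) (q : ℕ → Prop) : Set ℝ :=
  {x | x ∈ Set.Ico 0 1 ∧ q ⌊(N : ℝ) * x⌋₊}

lemma floor_mul_eq_iff_mem_Ico {N : ℕ} (hN : 0 < N) {x : ℝ} (hx : 0 ≤ x) {a : ℕ} :
    ⌊(N : ℝ) * x⌋₊ = a ↔ x ∈ Set.Ico ((a : ℝ) / N) ((a + 1) / N) := by
  have hN' : (0 : ℝ) < N := by exact_mod_cast hN
  rw [Nat.floor_eq_iff (by positivity), Set.mem_Ico, div_le_iff₀ hN', lt_div_iff₀ hN',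
    mul_comm x]

lemma floor_mul_div_eq {N M : ℕ} (hM : 0 < M) (h : N ∣ M) (x : ℝ) :
    ⌊(M : ℝ) * x⌋₊ / (M / N) = ⌊(N : ℝ) * x⌋₊ := by
  obtain ⟨c, rfl⟩ := h
  have hc : (c : ℝ) ≠ 0 := by exact_mod_cast (Nat.pos_of_mul_pos_left hM).ne'
  rw [Nat.mul_div_cancel_left _ (Nat.pos_of_mul_pos_right hM), ← Nat.floor_div_natCast]
  congr 1
  push_cast
  field_simp

lemma floorEvent_eq_of_dvd {N M : ℕ} (hM : 0 < M) (h : N ∣ M) (q : ℕ → Prop) :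
    floorEvent N q = floorEvent M (fun a => q (a / (M / N))) := by
  ext x
  simp only [floorEvent, Set.mem_ofPred_eq, floor_mul_div_eq hM h]

lemma floorEvent_inter (N : ℕ) (p q : ℕ → Prop) :
    floorEvent N p ∩ floorEvent N q = floorEvent N (fun a => p a ∧ q a) := by
  ext x
  simp only [floorEvent, Set.mem_inter_iff, Set.mem_ofPred_eq]
  tauto

lemma floorEvent_eq_biUnion {N : ℕ} (hN : 0 < N) (q : ℕ → Prop) [DecidablePred q] :
    floorEvent N q = ⋃ a ∈ {a ∈ range N | q a}, Set.Ico ((a : ℝ) / N) ((a + 1) / N) := by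
  have hN' : (0 : ℝ) < N := by exact_mod_cast hN
  ext x
  simp only [floorEvent, Set.mem_ofPred_eq, Set.mem_iUnion, mem_filter, mem_range, exists_prop]
  constructor
  · rintro ⟨⟨hx0, hx1⟩, hq⟩
    refine ⟨_, ⟨?_, hq⟩, (floor_mul_eq_iff_mem_Ico hN hx0).1 rfl⟩
    exact Nat.floor_lt (by positivity) |>.2 (by nlinarith)
  · rintro ⟨a, ⟨haN, hq⟩, hx⟩
    have hx0 : 0 ≤ x := le_trans (by positivity) hx.1
    refine ⟨⟨hx0, hx.2.trans_le ?_⟩, (floor_mul_eq_iff_mem_Ico hN hx0).2 hx ▸ hq⟩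
    rw [div_le_one hN']
    exact_mod_cast haN

lemma volume_floorEvent {N : ℕ} (hN : 0 < N) (q : ℕ → Prop) [DecidablePred q] :
    volume (floorEvent N q) = #{a ∈ range N | q a} / N := by
  have hN' : (0 : ℝ) < N := by exact_mod_cast hN
  rw [floorEvent_eq_biUnion hN, measure_biUnion_finset]
  · have hlen : ∀ a : ℕ,
        volume (Set.Ico ((a : ℝ) / N) ((a + 1) / N)) = (N : ℝ≥0∞)⁻¹ := by
      intro a
      rw [Real.volume_Ico, ← ENNReal.ofReal_natCast, ← ENNReal.ofReal_inv_of_pos hN']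
      congr 1
      field_simp
      ring
    rw [sum_congr rfl fun a _ => hlen a, sum_const, nsmul_eq_mul, div_eq_mul_inv]
  · intro a _ b _ hab
    refine Set.disjoint_left.2 fun x hxa hxb => hab ?_
    have hx0 : 0 ≤ x := le_trans (by positivity) hxa.1
    exact ((floor_mul_eq_iff_mem_Ico hN hx0).2 hxa).symm.trans
      ((floor_mul_eq_iff_mem_Ico hN hx0).2 hxb)
  · exact fun _ _ => measurableSet_Ico

lemma card_filter_range_mul {P K : ℕ} (hK : 0 < K) (p t : ℕ → Prop)
    [DecidablePred p] [DecidablePred t] :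
    #{a ∈ range (P * K) | p (a / K) ∧ t (a % K)} =
      #{n ∈ range P | p n} * #{r ∈ range K | t r} := by
  have hdiv : ∀ n r : ℕ, r < K → (n * K + r) / K = n := fun n r hr => by
    rw [add_comm, Nat.add_mul_div_right _ _ hK, Nat.div_eq_of_lt hr, zero_add]
  have hmod : ∀ n r : ℕ, r < K → (n * K + r) % K = r := fun n r hr => by
    rw [add_comm, Nat.add_mul_mod_self_right, Nat.mod_eq_of_lt hr]
  rw [← card_product]
  refine card_nbij' (fun a => (a / K, a % K)) (fun b => b.1 * K + b.2) ?_ ?_ ?_ ?_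
  · intro a ha
    simp only [coe_filter, mem_range, Set.mem_ofPred_eq, coe_product, Set.mem_prod] at ha ⊢
    exact ⟨⟨(Nat.div_lt_iff_lt_mul hK).2 ha.1, ha.2.1⟩, Nat.mod_lt _ hK, ha.2.2⟩
  · rintro ⟨n, r⟩ hb
    simp only [coe_product, coe_filter, mem_range, Set.mem_prod, Set.mem_ofPred_eq] at hb
    obtain ⟨⟨hn, hp⟩, hr, ht⟩ := hb
    simp only [coe_filter, mem_range, Set.mem_ofPred_eq, hdiv n r hr, hmod n r hr]
    exact ⟨by nlinarith, hp, ht⟩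
  · intro a _
    exact Nat.div_add_mod' a K
  · rintro ⟨n, r⟩ hb
    simp only [coe_product, coe_filter, mem_range, Set.mem_prod, Set.mem_ofPred_eq] at hb
    simp only [hdiv n r hb.2.1, hmod n r hb.2.1]

lemma volume_floorEvent_inter_mod {P K : ℕ} (hP : 0 < P) (hK : 0 < K) (p t : ℕ → Prop) :
    volume (floorEvent P p ∩ floorEvent (P * K) (fun a => t (a % K))) =
      volume (floorEvent P p) * volume (floorEvent (P * K) (fun a => t (a % K))) := by
  classical
  have hPK : 0 < P * K := Nat.mul_pos hP hK
  have hP0 : (P : ℝ≥0∞) ≠ 0 := by exact_mod_cast hP.ne'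
  have hK0 : (K : ℝ≥0∞) ≠ 0 := by exact_mod_cast hK.ne'
  have hcount_p := card_filter_range_mul (P := P) hK p (fun _ => True)
  have hcount_t := card_filter_range_mul (P := P) hK (fun _ => True) t
  simp only [and_true, true_and, filter_true, card_range] at hcount_p hcount_t
  rw [floorEvent_eq_of_dvd hPK (dvd_mul_right P K), Nat.mul_div_cancel_left _ hP,
    floorEvent_inter, volume_floorEvent hPK, volume_floorEvent hPK, volume_floorEvent hPK,
    card_filter_range_mul hK, hcount_p, hcount_t]
  push_cast
  rw [ENNReal.mul_div_mul_right _ _ hK0 (ENNReal.natCast_ne_top K),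
    ENNReal.mul_div_mul_left _ _ hP0 (ENNReal.natCast_ne_top P), div_eq_mul_inv,
    div_eq_mul_inv, div_eq_mul_inv,
    ENNReal.mul_inv (Or.inl hP0) (Or.inl (ENNReal.natCast_ne_top P))]
  ring

lemma biInter_inter_Ico_eq_floorEvent {ι : Type*} {B : ι → Set ℝ} {s : Finset ι}
    {N : ι → ℕ} {q : ι → ℕ → Prop}
    (hB : ∀ j ∈ s, B j ∩ Set.Ico 0 1 = floorEvent (N j) (q j)) {M : ℕ} (hM : 0 < M)
    (hdvd : ∀ j ∈ s, N j ∣ M) :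
    (⋂ j ∈ s, B j) ∩ Set.Ico 0 1 =
      floorEvent M (fun a => ∀ j ∈ s, q j (a / (M / N j))) := by
  ext x
  have hB' : ∀ j ∈ s, x ∈ Set.Ico 0 1 → (x ∈ B j ↔ q j ⌊(N j : ℝ) * x⌋₊) :=
    fun j hj hx => by
      simpa [floorEvent, hx.1, hx.2] using Set.ext_iff.1 (hB j hj) x
  simp only [Set.mem_inter_iff, Set.mem_iInter₂, floorEvent, Set.mem_ofPred_eq]
  constructor
  · rintro ⟨hxB, hx⟩
    exact ⟨hx, fun j hj => floor_mul_div_eq hM (hdvd j hj) x ▸ (hB' j hj hx).1 (hxB j hj)⟩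
  · rintro ⟨hx, hq⟩
    exact ⟨fun j hj => (hB' j hj hx).2 (floor_mul_div_eq hM (hdvd j hj) x ▸ hq j hj), hx⟩

lemma volume_biInter_inter_Ico {P : ℕ → ℕ} (hP : ∀ j, 0 < P j)
    (hdvd : ∀ j k, j ≤ k → P j ∣ P k) {B : ℕ → Set ℝ}
    (hB : ∀ j, ∃ t : ℕ → Prop,
      B j ∩ Set.Ico 0 1 = floorEvent (P (j + 1)) (fun a => t (a % (P (j + 1) / P j))))
    (s : Finset ℕ) :
    volume ((⋂ j ∈ s, B j) ∩ Set.Ico 0 1) = ∏ j ∈ s, volume (B j ∩ Set.Ico 0 1) := by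
  classical
  choose t ht using hB
  induction s using Finset.induction_on_max with
  | empty => simp [Real.volume_Ico]
  | insert a s hlt ih =>
    set K := P (a + 1) / P a
    have hPK : P a * K = P (a + 1) := Nat.mul_div_cancel' (hdvd a (a + 1) a.le_succ)
    have hK : 0 < K := Nat.pos_of_mul_pos_left (hPK ▸ hP (a + 1))
    have hs := biInter_inter_Ico_eq_floorEvent (fun j _ => ht j) (hP a)
      (fun j hj => hdvd (j + 1) a (hlt j hj))
    have hinsert : (⋂ j ∈ insert a s, B j) ∩ Set.Ico 0 1 =
        ((⋂ j ∈ s, B j) ∩ Set.Ico 0 1) ∩ (B a ∩ Set.Ico 0 1) := by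
      rw [set_biInter_insert]
      ext x
      simp only [Set.mem_inter_iff]
      tauto
    have hBa : B a ∩ Set.Ico 0 1 = floorEvent (P a * K) (fun x => t a (x % K)) := by
      rw [ht a, hPK]
    rw [hinsert, prod_insert fun ha => (hlt a ha).false, ← ih, hs, hBa,
      volume_floorEvent_inter_mod (hP a) hK, mul_comm]

def scale (i : ℕ) : ℕ := 2 ^ 2 ^ i ^ 4

lemma scale_pos (i : ℕ) : 0 < scale i := by
  unfold scale
  positivity

lemma scale_dvd_scale {i j : ℕ} (h : i ≤ j) : scale i ∣ scale j :=
  pow_dvd_pow 2 (Nat.pow_le_pow_right two_pos (Nat.pow_le_pow_left h 4))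

lemma Ffield_le (i : ℕ) : Ffield i ≤ (inferInstance : MeasurableSpace ℝ) := by
  refine MeasurableSpace.generateFrom_le ?_
  rintro _ ⟨a, -, -, rfl⟩
  exact measurableSet_Ico

lemma Ffield_generator_eq (i b : ℕ) :
    Set.Ico ((((b + 1 : ℕ) : ℝ) - 1) / 2 ^ 2 ^ (i + 1) ^ 4)
      (((b + 1 : ℕ) : ℝ) / 2 ^ 2 ^ (i + 1) ^ 4) =
      Set.Ico ((b : ℝ) / scale (i + 1)) ((b + 1) / scale (i + 1)) := by
  simp [scale]

lemma measurableSet_Ffield_Ico {i b : ℕ} (hb : b < scale (i + 1)) :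
    MeasurableSet[Ffield i] (Set.Ico ((b : ℝ) / scale (i + 1)) ((b + 1) / scale (i + 1))) :=
  MeasurableSpace.measurableSet_generateFrom
    ⟨b + 1, by omega, hb, (Ffield_generator_eq i b).symm⟩

lemma mem_iff_of_measurableSet_Ffield {i : ℕ} {s : Set ℝ} (hs : MeasurableSet[Ffield i] s)
    {x y : ℝ} (hx : 0 ≤ x) (hy : 0 ≤ y)
    (hxy : ⌊(scale (i + 1) : ℝ) * x⌋₊ = ⌊(scale (i + 1) : ℝ) * y⌋₊) :
    x ∈ s ↔ y ∈ s := by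
  induction s, hs using MeasurableSpace.generateFrom_induction with
  | hC t ht _ =>
    obtain ⟨a, ha, -, rfl⟩ := ht
    obtain ⟨b, rfl⟩ : ∃ b, a = b + 1 := ⟨a - 1, by omega⟩
    rw [Ffield_generator_eq, ← floor_mul_eq_iff_mem_Ico (scale_pos _) hx,
      ← floor_mul_eq_iff_mem_Ico (scale_pos _) hy, hxy]
  | empty => simp
  | compl t _ ih => exact not_congr ih
  | iUnion f _ ih =>
    simp only [Set.mem_iUnion]
    exact exists_congr ih

lemma eq_of_floor_eq_of_measurable_Ffield {i : ℕ} {g : ℝ → ℝ} (hg : Measurable[Ffield i] g)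
    {x y : ℝ} (hx : 0 ≤ x) (hy : 0 ≤ y)
    (hxy : ⌊(scale (i + 1) : ℝ) * x⌋₊ = ⌊(scale (i + 1) : ℝ) * y⌋₊) : g x = g y :=
  (mem_iff_of_measurableSet_Ffield (hg (measurableSet_singleton (g y))) hx hy hxy).2 rfl

lemma condExp_Ffield_div_eq_intervalIntegral {i : ℕ} {Y : ℝ → ℝ}
    (hY : Integrable Y (volume.restrict (Set.Icc 0 1))) {u : ℝ} (hu : u ∈ Set.Ico (0 : ℝ) 1)
    {b : ℕ} (hb : ⌊(scale (i + 1) : ℝ) * u⌋₊ = b) :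
    (volume.restrict (Set.Icc (0 : ℝ) 1))[Y | Ffield i] u / scale (i + 1) =
      ∫ t in b / (scale (i + 1) : ℝ)..(b + 1) / (scale (i + 1) : ℝ), Y t := by
  set μ := volume.restrict (Set.Icc (0 : ℝ) 1)
  set Q : ℕ := scale (i + 1)
  have hQ : (0 : ℝ) < Q := by exact_mod_cast scale_pos (i + 1)
  have hbQ : b < Q := hb ▸ (Nat.floor_lt (by nlinarith [hu.1])).2 (by nlinarith [hu.2])
  set I := Set.Ico ((b : ℝ) / Q) ((b + 1) / Q)
  have hIsub : I ⊆ Set.Icc 0 1 := by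
    have : ((b : ℝ) + 1) / Q ≤ 1 := by
      rw [div_le_one hQ]
      exact_mod_cast hbQ
    exact fun t ht => ⟨le_trans (by positivity) ht.1, ht.2.le.trans this⟩
  have hconst : ∀ t ∈ I, μ[Y | Ffield i] t = μ[Y | Ffield i] u := fun t ht => by
    have ht0 : 0 ≤ t := le_trans (by positivity) ht.1
    refine eq_of_floor_eq_of_measurable_Ffield stronglyMeasurable_condExp.measurable ht0 hu.1 ?_
    rw [hb]
    exact (floor_mul_eq_iff_mem_Ico (scale_pos _) ht0).2 ht
  have hμI : μ.restrict I = volume.restrict I := by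
    rw [Measure.restrict_restrict measurableSet_Ico, Set.inter_eq_self_of_subset_left hIsub]
  calc μ[Y | Ffield i] u / Q = ∫ t in I, μ[Y | Ffield i] t ∂μ := by
        have hlen : ((b : ℝ) + 1) / Q - b / Q = 1 / Q := by ring
        rw [setIntegral_congr_fun measurableSet_Ico hconst, setIntegral_const, measureReal_def,
          Measure.restrict_apply measurableSet_Ico, Set.inter_eq_self_of_subset_left hIsub,
          Real.volume_Ico, hlen, ENNReal.toReal_ofReal (by positivity), smul_eq_mul]
        ring
    _ = ∫ t in I, Y t ∂μ :=
        setIntegral_condExp (Ffield_le i) hY (measurableSet_Ffield_Ico hbQ)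
    _ = _ := by
        rw [hμI, intervalIntegral.integral_of_le (by gcongr; linarith),
          integral_Ico_eq_integral_Ioc]

lemma condExp_Ffield_eq_of_floor_modEq {i : ℕ} {Y : ℝ → ℝ}
    (hY : Integrable Y (volume.restrict (Set.Icc 0 1)))
    (hper : Function.Periodic Y (1 / scale i)) {x y : ℝ}
    (hx : x ∈ Set.Ico (0 : ℝ) 1) (hy : y ∈ Set.Ico (0 : ℝ) 1)
    (hxy : ⌊(scale (i + 1) : ℝ) * x⌋₊ ≡ ⌊(scale (i + 1) : ℝ) * y⌋₊
      [MOD scale (i + 1) / scale i]) :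
    (volume.restrict (Set.Icc (0 : ℝ) 1))[Y | Ffield i] x =
      (volume.restrict (Set.Icc (0 : ℝ) 1))[Y | Ffield i] y := by
  have hx' := condExp_Ffield_div_eq_intervalIntegral (i := i) hY hx rfl
  have hy' := condExp_Ffield_div_eq_intervalIntegral (i := i) hY hy rfl
  set P : ℕ := scale i
  set Q : ℕ := scale (i + 1)
  set a := ⌊(Q : ℝ) * x⌋₊
  set b := ⌊(Q : ℝ) * y⌋₊
  have hP : (P : ℝ) ≠ 0 := by exact_mod_cast (scale_pos i).ne'
  have hQ : (Q : ℝ) ≠ 0 := by exact_mod_cast (scale_pos (i + 1)).ne'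
  obtain ⟨s, hs⟩ := Nat.modEq_iff_dvd.1 hxy
  have hshift : ∀ c : ℝ, (a + c) / Q + s * (1 / P) = (b + c) / Q := by
    intro c
    have hPQ : ((Q / P : ℕ) : ℝ) * P = Q := by
      exact_mod_cast Nat.div_mul_cancel (scale_dvd_scale i.le_succ)
    have hb : (b : ℝ) = a + (Q / P : ℕ) * s := by
      have := congrArg (Int.cast : ℤ → ℝ) (sub_eq_iff_eq_add'.1 hs)
      push_cast at this
      exact this
    have hsP : (s : ℝ) * (1 / P) = (Q / P : ℕ) * s / Q := by
      have hg : ((Q / P : ℕ) : ℝ) ≠ 0 := left_ne_zero_of_mul (hPQ ▸ hQ)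
      rw [← hPQ]
      field_simp
    rw [hb, hsP]
    ring
  have hshift0 := hshift 0
  simp only [add_zero] at hshift0
  rw [← div_left_inj' hQ, hx', hy', ← hshift0, ← hshift 1,
    ← intervalIntegral.integral_comp_add_right]
  exact intervalIntegral.integral_congr fun t _ => (hper.int_mul s t).symm

lemma exists_inter_Ico_eq_floorEvent {S : Set ℝ} {N K : ℕ}
    (hS : ∀ x ∈ Set.Ico (0 : ℝ) 1, ∀ y ∈ Set.Ico (0 : ℝ) 1,
      ⌊(N : ℝ) * x⌋₊ ≡ ⌊(N : ℝ) * y⌋₊ [MOD K] → x ∈ S → y ∈ S) :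
    ∃ t : ℕ → Prop, S ∩ Set.Ico 0 1 = floorEvent N (fun a => t (a % K)) := by
  refine ⟨fun r => ∃ u ∈ S ∩ Set.Ico 0 1, ⌊(N : ℝ) * u⌋₊ % K = r, ?_⟩
  ext x
  simp only [floorEvent, Set.mem_inter_iff, Set.mem_ofPred_eq]
  constructor
  · rintro ⟨hxS, hx⟩
    exact ⟨hx, x, ⟨hxS, hx⟩, rfl⟩
  · rintro ⟨hx, u, ⟨huS, hu⟩, hmod⟩
    exact ⟨hS u hu x hx hmod huS, hx⟩

lemma exists_condExp_Ffield_event_eq_floorEvent {i : ℕ} {Y : ℝ → ℝ}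
    (hY : Integrable Y (volume.restrict (Set.Icc 0 1)))
    (hper : Function.Periodic Y (1 / scale i)) (p : ℝ → Prop) :
    ∃ t : ℕ → Prop,
      {x ∈ Set.Icc (0 : ℝ) 1 | p ((volume.restrict (Set.Icc (0 : ℝ) 1))[Y | Ffield i] x)} ∩
          Set.Ico 0 1 =
        floorEvent (scale (i + 1)) (fun a => t (a % (scale (i + 1) / scale i))) := by
  refine exists_inter_Ico_eq_floorEvent fun x hx y hy hxy hxp =>
    ⟨Set.Ico_subset_Icc_self hy, ?_⟩
  rw [← condExp_Ffield_eq_of_floor_modEq hY hper hx hy hxy]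
  exact hxp.2

lemma volume_restrict_Icc_apply (S : Set ℝ) :
    volume.restrict (Set.Icc (0 : ℝ) 1) S = volume (S ∩ Set.Ico 0 1) := by
  rw [← Measure.restrict_congr_set Ico_ae_eq_Icc, Measure.restrict_apply' measurableSet_Ico]

lemma periodic_sum_cos_two_pow (d : ℕ) :
    Function.Periodic (fun x : ℝ => ∑ j ∈ range d, Real.cos (2 * π * 2 ^ j * x)) 1 := by
  intro x
  refine sum_congr rfl fun j _ => ?_
  rw [show 2 * π * 2 ^ j * (x + 1) = 2 * π * 2 ^ j * x + ((2 ^ j : ℕ) : ℝ) * (2 * π) by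
    push_cast; ring]
  exact Real.cos_add_nat_mul_two_pi _ _

lemma periodic_sum_comp_natCast_mul {ι : Type*} {f : ℝ → ℝ} (hf : Function.Periodic f 1)
    (s : Finset ι) {n : ι → ℕ} {P : ℕ} (h : ∀ k ∈ s, P ∣ n k) :
    Function.Periodic (fun x => ∑ k ∈ s, f (n k * x)) (1 / P) := by
  intro x
  refine sum_congr rfl fun k hk => ?_
  obtain ⟨c, hc⟩ := h k hk
  rcases eq_or_ne P 0 with rfl | hP
  · simp
  · have hP' : (P : ℝ) ≠ 0 := by exact_mod_cast hP
    rw [show (n k : ℝ) * (x + 1 / P) = n k * x + c * 1 by rw [hc]; push_cast; field_simp]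
    exact hf.nat_mul c _

lemma scale_dvd_n (E : ExplicitConstruction) {i k : ℕ} (hi : 1 ≤ i) (hk : k ∈ Block E.R i) :
    scale i ∣ E.n k := by
  obtain ⟨m, hm, hkm⟩ := mem_biUnion.1 (E.hpart i hi ▸ hk)
  rw [E.hn i hi m hm k hkm]
  exact dvd_mul_right _ _

end DyadicDigits

open DyadicDigits

/-- With `Y_i(x) = ∑_{k ∈ Δ_i} f(n_k x)`, `Z_i = E[Y_i | 𝔉_i]` and
`A_i = {x ∈ [0,1] : |Z_i(x)| ≥ (d√ε/2 - 2)√(2 R^i log log R^i) - 2d²i - 3}`,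
the sets `A_1, A_2, A_3, …` are mutually independent with respect to Lebesgue measure
on `[0,1]`. -/
theorem statement18 (E : ExplicitConstruction) (f : ℝ → ℝ)
    (hf : ∀ x, f x = ∑ j ∈ Finset.range E.d, Real.cos (2 * Real.pi * 2 ^ j * x))
    (Y : ℕ → ℝ → ℝ)
    (hY : ∀ i x, Y i x = ∑ k ∈ Block E.R i, f ((E.n k : ℝ) * x))
    (Z : ℕ → ℝ → ℝ)
    (hZ : ∀ i, Z i = (volume.restrict (Set.Icc (0:ℝ) 1))[Y i | Ffield i])
    (A : ℕ → Set ℝ)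
    (hA : ∀ i, A i = {x ∈ Set.Icc (0:ℝ) 1 |
      ((E.d : ℝ) * Real.sqrt E.ε / 2 - 2) *
          Real.sqrt (2 * (E.R : ℝ) ^ i * Real.log (Real.log ((E.R : ℝ) ^ i)))
        - 2 * (E.d : ℝ) ^ 2 * i - 3 ≤ |Z i x|}) :
    ProbabilityTheory.iIndepSet (fun i : ℕ => A (i + 1))
      (volume.restrict (Set.Icc (0:ℝ) 1)) := by
  have hfc : Continuous f := by
    rw [funext hf]
    fun_prop
  have hfper : Function.Periodic f 1 := by
    rw [funext hf]
    exact periodic_sum_cos_two_pow E.d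
  have hYeq : ∀ i, Y i = fun x => ∑ k ∈ Block E.R i, f (E.n k * x) := fun i => funext (hY i)
  have hYint : ∀ i, Integrable (Y i) (volume.restrict (Set.Icc 0 1)) := fun i => by
    rw [hYeq]
    exact (by fun_prop : Continuous _).integrableOn_Icc
  have hAmeas : ∀ i, MeasurableSet (A i) := fun i => by
    have hZmeas : Measurable (Z i) :=
      hZ i ▸ (stronglyMeasurable_condExp.mono (Ffield_le i)).measurable
    rw [hA i]
    exact measurableSet_Icc.inter (measurableSet_le measurable_const hZmeas.abs)
  have hArep : ∀ i, 1 ≤ i → ∃ t : ℕ → Prop, A i ∩ Set.Ico 0 1 =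
      floorEvent (scale (i + 1)) (fun a => t (a % (scale (i + 1) / scale i))) := by
    intro i hi
    have hper : Function.Periodic (Y i) (1 / scale i) :=
      hYeq i ▸ periodic_sum_comp_natCast_mul hfper _ fun k hk => scale_dvd_n E hi hk
    rw [hA i, hZ i]
    exact exists_condExp_Ffield_event_eq_floorEvent (hYint i) hper (fun z => _ ≤ |z|)
  rw [ProbabilityTheory.iIndepSet_iff_meas_biInter fun i => hAmeas (i + 1)]
  intro s
  simp only [volume_restrict_Icc_apply]
  exact volume_biInter_inter_Ico (P := fun j => scale (j + 1)) (fun j => scale_pos _)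
    (fun j k hjk => scale_dvd_scale (by omega)) (fun j => hArep (j + 1) (by omega)) s
end
end
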